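/- arXiv:2008.01031 — 6 statements merged into one kernel-verified Lean document; each statement's English description precedes it below -/
import Mathlib

section
/- Let F be a k-graph with s vertices and f edges, f > 0, and let H = H^{(k)}(n,p). Let 𝒜 be a nonempty family of ordered s-subsets of the vertex set of H; for each A ∈ 𝒜 let I_A be the indicator of the event that A spans a labelled copy of F in H, and let X = Σ_{A∈𝒜} I_A. Then P[X ≥ 2·E(X)] ≤ s!·2^{2s}·n^{2s}·p^{2f} / (E(X)²·Φ_F). -/
open Finset Filter Topology

/-- All potential edges of a `k`-uniform hypergraph on `Fin n`. -/
def allEdges (n k : ℕ) : Finset (Finset (Fin n)) :=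
  Finset.powersetCard k Finset.univ

/-- Probability that the binomial random `k`-graph `H^{(k)}(n,p)` satisfies `P`. -/
noncomputable def rProb (n k : ℕ) (p : ℝ) (P : Finset (Finset (Fin n)) → Prop) : ℝ :=
  letI : DecidablePred P := fun E => Classical.propDecidable (P E)
  ∑ E ∈ (allEdges n k).powerset,
    if P E then p ^ E.card * (1 - p) ^ ((allEdges n k).card - E.card) else 0

/-- Expectation of `X` with respect to the binomial random `k`-graph `H^{(k)}(n,p)`. -/
noncomputable def rExp (n k : ℕ) (p : ℝ) (X : Finset (Finset (Fin n)) → ℝ) : ℝ :=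
  ∑ E ∈ (allEdges n k).powerset,
    p ^ E.card * (1 - p) ^ ((allEdges n k).card - E.card) * X E

/-- The degree of a vertex `v` in the hypergraph `H`. -/
def degH {n : ℕ} (H : Finset (Finset (Fin n))) (v : Fin n) : ℕ :=
  (H.filter fun e => v ∈ e).card

/-- The minimum vertex degree of `H`. -/
noncomputable def minDeg {n : ℕ} (H : Finset (Finset (Fin n))) : ℕ :=
  sInf { d : ℕ | ∃ v : Fin n, d = degH H v }

/-- `G` has a perfect matching. -/
def HasPerfectMatching {n : ℕ} (G : Finset (Finset (Fin n))) : Prop :=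
  ∃ M : Finset (Finset (Fin n)), M ⊆ G ∧
    (∀ e ∈ M, ∀ f ∈ M, e ≠ f → Disjoint e f) ∧ ∀ v : Fin n, ∃ e ∈ M, v ∈ e

/-- `f` is (the embedding of) a copy of `F` in `G`. -/
def IsCopyIn {b n : ℕ} (F : Finset (Finset (Fin b))) (G : Finset (Finset (Fin n)))
    (f : Fin b → Fin n) : Prop :=
  Function.Injective f ∧ ∀ e ∈ F, e.image f ∈ G

/-- The induced subgraph of `G` on `S` contains a copy of `F`. -/
def ContainsCopy {b n : ℕ} (F : Finset (Finset (Fin b))) (G : Finset (Finset (Fin n)))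
    (S : Finset (Fin n)) : Prop :=
  ∃ f : Fin b → Fin n, IsCopyIn F G f ∧ ∀ x, f x ∈ S

/-- `T` is a collection of pairwise vertex-disjoint copies of `F` in `G` whose vertex
sets partition `S`, i.e. an `F`-factor of the induced subgraph `G[S]`. -/
def IsFactorWitness {b n : ℕ} (F : Finset (Finset (Fin b))) (G : Finset (Finset (Fin n)))
    (S : Finset (Fin n)) (T : Finset (Fin b → Fin n)) : Prop :=
  (∀ f ∈ T, IsCopyIn F G f) ∧
  (∀ f ∈ T, ∀ g ∈ T, f ≠ g → Disjoint (Finset.univ.image f) (Finset.univ.image g)) ∧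
  T.biUnion (fun f => Finset.univ.image f) = S

/-- The induced subgraph `G[S]` has an `F`-factor. -/
def HasFactorOn {b n : ℕ} (F : Finset (Finset (Fin b))) (G : Finset (Finset (Fin n)))
    (S : Finset (Fin n)) : Prop :=
  ∃ T, IsFactorWitness F G S T

/-- `A` is an `(S,F)`-absorber in `H`. -/
def IsAbsorber {b n : ℕ} (F : Finset (Finset (Fin b))) (H : Finset (Finset (Fin n)))
    (S A : Finset (Fin n)) : Prop :=
  A.Nonempty ∧ Disjoint A S ∧ b ∣ A.card ∧ HasFactorOn F H A ∧ HasFactorOn F H (A ∪ S)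

/-- `A` is a simple `S`-absorber in `G`: `A` is a disjoint union of `b`-sets
`A₁, …, A_b`, with distinguished vertices `u i ∈ A i`, such that for some labelling
`s₁, …, s_b` of `S`, each `G[Aᵢ]` and each `G[{sᵢ} ∪ (Aᵢ \ {u i})]` contains a copy of
`F`, and `G[{u 1, …, u b}]` contains a copy of `F`. -/
def SimpleAbsorber {b n : ℕ} (F : Finset (Finset (Fin b))) (G : Finset (Finset (Fin n)))
    (S A : Finset (Fin n)) : Prop :=
  Disjoint A S ∧
  ∃ (Ai : Fin b → Finset (Fin n)) (u : Fin b → Fin n) (s : Fin b → Fin n),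
    Function.Injective s ∧ Finset.univ.image s = S ∧
    (∀ i, (Ai i).card = b) ∧ (∀ i, u i ∈ Ai i) ∧
    (∀ i j, i ≠ j → Disjoint (Ai i) (Ai j)) ∧
    Finset.univ.biUnion Ai = A ∧
    (∀ i, ContainsCopy F G (Ai i)) ∧
    (∀ i, ContainsCopy F G (insert (s i) ((Ai i).erase (u i)))) ∧
    ContainsCopy F G (Finset.univ.image u)

/-- `Φ_F(n,p) = min { n^{v_{F'}} p^{e_{F'}} : F' ⊆ F, e_{F'} > 0 }`, the minimum being
over all subgraphs `F'` of `F` (given by a vertex set `V' ⊆ Vset` and a nonempty edge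
set `E' ⊆ F` with all edges inside `V'`). -/
noncomputable def Phi {α : Type*} (Vset : Finset α) (F : Finset (Finset α)) (n : ℕ)
    (p : ℝ) : ℝ :=
  sInf { x : ℝ | ∃ (V' : Finset α) (E' : Finset (Finset α)), V' ⊆ Vset ∧ E' ⊆ F ∧
    E'.Nonempty ∧ (∀ e ∈ E', e ⊆ V') ∧ x = (n : ℝ) ^ V'.card * p ^ E'.card }

/-- `d*(F) = max { e_{F'}/(v_{F'} - 1) : F' ⊆ F, v_{F'} ≥ 2 }`. -/
noncomputable def dStar {α : Type*} (Vset : Finset α) (F : Finset (Finset α)) : ℝ :=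
  sSup { x : ℝ | ∃ (V' : Finset α) (E' : Finset (Finset α)), V' ⊆ Vset ∧ E' ⊆ F ∧
    (∀ e ∈ E', e ⊆ V') ∧ 2 ≤ V'.card ∧ x = (E'.card : ℝ) / ((V'.card : ℝ) - 1) }

/-- The number of embeddings of `F_v` (the spanning subgraph of `F` consisting of the
edges containing `v`) into `H` that map `v` to `w`. -/
noncomputable def embCount (k b : ℕ) (F : Finset (Finset (Fin b))) (v : Fin b) {n : ℕ}
    (H : Finset (Finset (Fin n))) (w : Fin n) : ℕ :=
  letI : DecidablePred (fun f : Fin b → Fin n =>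
      Function.Injective f ∧ f v = w ∧ ∀ e ∈ F, v ∈ e → e.image f ∈ H) :=
    fun f => Classical.propDecidable _
  (Finset.univ.filter fun f : Fin b → Fin n =>
    Function.Injective f ∧ f v = w ∧ ∀ e ∈ F, v ∈ e → e.image f ∈ H).card

/-- The set `Λ_{F,v}`. -/
def LambdaSet (k b : ℕ) (F : Finset (Finset (Fin b))) (v : Fin b) : Set ℝ :=
  { a : ℝ | 0 < a ∧ ∀ ε : ℝ, 0 < ε → ∃ ε' : ℝ, 0 < ε' ∧ ∃ n₀ : ℕ, ∀ n : ℕ, n₀ ≤ n →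
    ∀ H : Finset (Finset (Fin n)), (∀ e ∈ H, e.card = k) →
      (∀ u : Fin n, (a + ε) * ((n - 1).choose (k - 1) : ℝ) ≤ (degH H u : ℝ)) →
      ∀ w : Fin n, ε' * (n : ℝ) ^ (b - 1) ≤ (embCount k b F v H w : ℝ) }

/-- `α_F := min_{v ∈ V(F)} inf Λ_{F,v}`. -/
noncomputable def alphaF (k b : ℕ) (F : Finset (Finset (Fin b))) : ℝ :=
  ⨅ v : Fin b, sInf (LambdaSet k b F v)

/-- The `n`-vertex `k`-graph `H_n(A,B,η)`, whose edges are exactly the `k`-subsets of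
the vertex set meeting `A` (here `B` is the complement of `A`). -/
def Hgraph (n k : ℕ) (A : Finset (Fin n)) : Finset (Finset (Fin n)) :=
  (allEdges n k).filter fun e => (e ∩ A).Nonempty

/-- The link of `v` in `F`, a `(k-1)`-graph. -/
def linkAt {b : ℕ} (F : Finset (Finset (Fin b))) (v : Fin b) : Finset (Finset (Fin b)) :=
  (F.filter fun e => v ∈ e).image fun e => e.erase v

/-- The Turán number `ex(n, G)`: the maximum number of edges of a `k'`-graph on `n`
vertices containing no copy of `G`. -/
noncomputable def exNum (n k' : ℕ) {b : ℕ} (G : Finset (Finset (Fin b))) : ℕ :=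
  sSup { m : ℕ | ∃ H' : Finset (Finset (Fin n)), (∀ e ∈ H', e.card = k') ∧
    (¬ ∃ f : Fin b → Fin n, Function.Injective f ∧ ∀ e ∈ G, e.image f ∈ H') ∧
    m = H'.card }

/-- The number of ordered sets in `𝒜` spanning a labelled copy of `F` in `E`. -/
noncomputable def countSpan {s n : ℕ} (F : Finset (Finset (Fin s)))
    (𝒜 : Finset (Fin s → Fin n)) (E : Finset (Finset (Fin n))) : ℕ :=
  (𝒜.filter fun A => ∀ e ∈ F, e.image A ∈ E).card

section SecondMomentAux

open Finset

private lemma massOne' {α : Type*} [DecidableEq α] (U : Finset α) (p : ℝ) :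
    ∑ E ∈ U.powerset, p ^ E.card * (1-p) ^ (U.card - E.card) = 1 := by
  have h := Finset.prod_add (fun _ : α => p) (fun _ => (1-p)) U
  simp only [prod_const, add_sub_cancel, one_pow] at h
  refine Eq.trans ?_ h.symm
  apply Finset.sum_congr rfl
  intro t ht
  rw [Finset.mem_powerset] at ht
  rw [Finset.card_sdiff_of_subset ht]

private lemma massEvent' {α : Type*} [DecidableEq α] (U T : Finset α) (hT : T ⊆ U) (p : ℝ) :
    ∑ E ∈ U.powerset, (if T ⊆ E then p ^ E.card * (1-p) ^ (U.card - E.card) else 0)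
      = p ^ T.card := by
  classical
  rw [← Finset.sum_filter]
  have key : ∀ E ∈ (U.powerset.filter (fun E => T ⊆ E)),
      p ^ E.card * (1-p) ^ (U.card - E.card)
        = p ^ T.card * (p ^ (E \ T).card * (1-p) ^ ((U \ T).card - (E \ T).card)) := by
    intro E hE
    simp only [Finset.mem_filter, Finset.mem_powerset] at hE
    obtain ⟨hEU, hTE⟩ := hE
    have h1 : T.card ≤ E.card := Finset.card_le_card hTE
    have h2 : E.card ≤ U.card := Finset.card_le_card hEU
    have e1 : T.card + (E.card - T.card) = E.card := by omega
    have e2 : U.card - T.card - (E.card - T.card) = U.card - E.card := by omega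
    rw [Finset.card_sdiff_of_subset hTE, Finset.card_sdiff_of_subset hT, e2, ← mul_assoc, ← pow_add, e1]
  rw [Finset.sum_congr rfl key, ← Finset.mul_sum]
  have bij : ∑ E ∈ (U.powerset.filter (fun E => T ⊆ E)),
      (p ^ (E \ T).card * (1-p) ^ ((U \ T).card - (E \ T).card))
      = ∑ E' ∈ (U \ T).powerset, p ^ E'.card * (1-p) ^ ((U \ T).card - E'.card) := by
    apply Finset.sum_bij' (fun E _ => E \ T) (fun E' _ => E' ∪ T)
    · intro E hE
      simp only [Finset.mem_filter, Finset.mem_powerset] at hE ⊢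
      exact Finset.sdiff_subset_sdiff hE.1 (subset_refl T)
    · intro E' hE'
      simp only [Finset.mem_powerset] at hE'
      simp only [Finset.mem_filter, Finset.mem_powerset]
      constructor
      · exact Finset.union_subset (hE'.trans Finset.sdiff_subset) hT
      · exact Finset.subset_union_right
    · intro E hE
      simp only [Finset.mem_filter, Finset.mem_powerset] at hE
      exact Finset.sdiff_union_of_subset hE.2
    · intro E' hE'
      simp only [Finset.mem_powerset] at hE'
      apply Finset.union_sdiff_cancel_right
      exact Finset.disjoint_of_subset_left hE' Finset.sdiff_disjoint
    · intro E hE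
      rfl
  rw [bij, massOne']
  ring

private lemma aux_pow' (m : ℕ) (hm : 1 ≤ m) : ((m:ℝ)+1)^m ≤ 4 * (m:ℝ)^m := by
  have hm0 : (0:ℝ) < m := by exact_mod_cast hm
  have h1 : ((m:ℝ)+1) = (m:ℝ) * (1 + 1/(m:ℝ)) := by field_simp
  rw [h1, mul_pow]
  have h2 : (1 + 1/(m:ℝ)) ≤ Real.exp (1/(m:ℝ)) := by
    have := Real.add_one_le_exp (1/(m:ℝ)); linarith
  have h3 : (1 + 1/(m:ℝ))^m ≤ (Real.exp (1/(m:ℝ)))^m := by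
    apply pow_le_pow_left₀ (by positivity) h2
  have h4 : (Real.exp (1/(m:ℝ)))^m = Real.exp 1 := by
    rw [← Real.exp_nat_mul]
    congr 1
    field_simp
  have h5 : Real.exp 1 ≤ 4 := by
    have := Real.exp_one_lt_d9; linarith
  have h6 : (1 + 1/(m:ℝ))^m ≤ 4 := by rw [h4] at h3; linarith
  have h7 : (0:ℝ) ≤ (m:ℝ)^m := by positivity
  calc (m:ℝ)^m * (1 + 1/(m:ℝ))^m ≤ (m:ℝ)^m * 4 := by
        apply mul_le_mul_of_nonneg_left h6 h7
    _ = 4 * (m:ℝ)^m := by ring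

private lemma aux_fac' (s : ℕ) : ((s:ℝ)+1)^s ≤ (s.factorial : ℝ) * 4^s := by
  induction s with
  | zero => simp
  | succ s ih =>
    have hpos : (0:ℝ) ≤ ((s:ℝ)+1) := by positivity
    have step : (((s+1:ℕ)):ℝ)+1 = ((s:ℝ)+1)+1 := by push_cast; ring
    rw [step]
    calc (((s:ℝ)+1)+1)^(s+1) ≤ 4 * ((s:ℝ)+1)^(s+1) := by
          have := aux_pow' (s+1) (by omega)
          push_cast at this ⊢
          convert this using 2
      _ = 4 * (((s:ℝ)+1) * ((s:ℝ)+1)^s) := by ring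
      _ ≤ 4 * (((s:ℝ)+1) * ((s.factorial:ℝ) * 4^s)) := by
          apply mul_le_mul_of_nonneg_left _ (by norm_num)
          apply mul_le_mul_of_nonneg_left ih hpos
      _ = ((s+1).factorial : ℝ) * 4^(s+1) := by
          rw [Nat.factorial_succ]; push_cast; ring

private lemma prod_ite_card' {σ : Type*} [Fintype σ] [DecidableEq σ] (W : Finset σ)
    (a b : ℕ) :
    ∏ v : σ, (if v ∈ W then a else b) = a ^ W.card * b ^ (Fintype.card σ - W.card) := by
  rw [Finset.prod_ite]
  rw [Finset.prod_const, Finset.prod_const]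
  congr 1
  · congr 1
    simp [Finset.filter_mem_eq_inter]
  · congr 1
    rw [Finset.filter_not, Finset.filter_mem_eq_inter]
    simp [Finset.card_sdiff_of_subset, Finset.card_univ]

end SecondMomentAux

/-- Proposition 2.1 of BHKM. Let `F` be a `k`-graph with `s` vertices
and `f > 0` edges and let `H = H^{(k)}(n,p)`. Let `𝒜` be a nonempty family of ordered
`s`-subsets of `V(H)`; for `A ∈ 𝒜` let `I_A` indicate that `A` spans a labelled copy of
`F` in `H` and let `X = Σ_{A ∈ 𝒜} I_A`. Then
`P[X ≥ 2 E(X)] ≤ s! 2^{2s} n^{2s} p^{2f} / (E(X)² Φ_F)`. -/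
theorem second_moment_bound
    (k : ℕ) (hk : 2 ≤ k) (s f n : ℕ) (F : Finset (Finset (Fin s)))
    (hFcard : ∀ e ∈ F, e.card = k) (hFf : F.card = f) (hf : 0 < f)
    (p : ℝ) (hp0 : 0 < p) (hp1 : p ≤ 1)
    (𝒜 : Finset (Fin s → Fin n)) (h𝒜 : ∀ A ∈ 𝒜, Function.Injective A)
    (hne : 𝒜.Nonempty) :
    rProb n k p (fun E =>
        2 * rExp n k p (fun E' => (countSpan F 𝒜 E' : ℝ)) ≤ (countSpan F 𝒜 E : ℝ)) ≤
      (s.factorial : ℝ) * 2 ^ (2 * s) * (n : ℝ) ^ (2 * s) * p ^ (2 * f) /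
        ((rExp n k p fun E' => (countSpan F 𝒜 E' : ℝ)) ^ 2 *
          Phi (Finset.univ : Finset (Fin s)) F n p) := by
  classical
  set N := allEdges n k with hN
  set w : Finset (Finset (Fin n)) → ℝ :=
    fun E => p ^ E.card * (1 - p) ^ (N.card - E.card) with hw
  set T : (Fin s → Fin n) → Finset (Finset (Fin n)) :=
    fun A => F.image (fun e => e.image A) with hT
  set X : Finset (Finset (Fin n)) → ℝ := fun E => (countSpan F 𝒜 E : ℝ) with hX
  set μ : ℝ := rExp n k p X with hμ
  set Φ : ℝ := Phi (Finset.univ : Finset (Fin s)) F n p with hΦ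
  -- basic facts
  have hks : k ≤ s := by
    obtain ⟨e, he⟩ := Finset.card_pos.mp (hFf ▸ hf)
    calc k = e.card := (hFcard e he).symm
      _ ≤ (Finset.univ : Finset (Fin s)).card := Finset.card_le_card (Finset.subset_univ e)
      _ = s := by simp
  have hsn : s ≤ n := by
    obtain ⟨A, hA⟩ := hne
    have := Fintype.card_le_of_injective A (h𝒜 A hA)
    simpa using this
  have hn0 : (0:ℝ) < n := by
    have : 0 < n := by omega
    exact_mod_cast this
  have hw0 : ∀ E, 0 ≤ w E := by
    intro E
    apply mul_nonneg (pow_nonneg hp0.le _) (pow_nonneg (by linarith) _)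
  have hwsum : ∑ E ∈ N.powerset, w E = 1 := massOne' N p
  have hTsub : ∀ A ∈ 𝒜, T A ⊆ N := by
    intro A hA c hc
    simp only [hT, Finset.mem_image] at hc
    obtain ⟨e, he, rfl⟩ := hc
    simp only [hN, allEdges, Finset.mem_powersetCard]
    exact ⟨Finset.subset_univ _, by rw [Finset.card_image_of_injective _ (h𝒜 A hA), hFcard e he]⟩
  have hTcard : ∀ A ∈ 𝒜, (T A).card = f := by
    intro A hA
    rw [hT]
    rw [Finset.card_image_of_injective _ (Finset.image_injective (h𝒜 A hA)), hFf]
  have hXsum : ∀ E, X E = ∑ A ∈ 𝒜, (if T A ⊆ E then (1:ℝ) else 0) := by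
    intro E
    rw [hX]
    simp only [countSpan]
    rw [Finset.card_filter]
    push_cast
    apply Finset.sum_congr rfl
    intro A hA
    congr 1
    simp only [hT, Finset.image_subset_iff]
  -- expectation
  have hmu : μ = (𝒜.card : ℝ) * p ^ f := by
    rw [hμ, rExp]
    calc ∑ E ∈ N.powerset, w E * X E
        = ∑ E ∈ N.powerset, ∑ A ∈ 𝒜, (if T A ⊆ E then w E else 0) := by
          apply Finset.sum_congr rfl
          intro E _
          rw [hXsum E, Finset.mul_sum]
          apply Finset.sum_congr rfl
          intro A _
          rw [mul_ite, mul_one, mul_zero]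
      _ = ∑ A ∈ 𝒜, ∑ E ∈ N.powerset, (if T A ⊆ E then w E else 0) := Finset.sum_comm
      _ = ∑ A ∈ 𝒜, p ^ (T A).card := by
          apply Finset.sum_congr rfl
          intro A hA
          exact massEvent' N (T A) (hTsub A hA) p
      _ = ∑ A ∈ 𝒜, p ^ f := by
          apply Finset.sum_congr rfl
          intro A hA
          rw [hTcard A hA]
      _ = (𝒜.card : ℝ) * p ^ f := by rw [Finset.sum_const, nsmul_eq_mul]
  have hmupos : 0 < μ := by
    rw [hmu]
    apply mul_pos _ (pow_pos hp0 _)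
    exact_mod_cast Finset.card_pos.mpr hne
  -- second moment
  have hEX2 : ∑ E ∈ N.powerset, w E * (X E)^2
      = ∑ A ∈ 𝒜, ∑ B ∈ 𝒜, p ^ (T A ∪ T B).card := by
    have step1 : ∀ E ∈ N.powerset, w E * (X E)^2
        = ∑ A ∈ 𝒜, ∑ B ∈ 𝒜, (if T A ∪ T B ⊆ E then w E else 0) := by
      intro E _
      rw [hXsum E, sq, Finset.sum_mul_sum]
      simp only [Finset.mul_sum]
      apply Finset.sum_congr rfl
      intro A _
      apply Finset.sum_congr rfl
      intro B _
      by_cases h1 : T A ⊆ E <;> by_cases h2 : T B ⊆ E <;>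
        simp [h1, h2, Finset.union_subset_iff]
    rw [Finset.sum_congr rfl step1, Finset.sum_comm]
    apply Finset.sum_congr rfl
    intro A hA
    rw [Finset.sum_comm]
    apply Finset.sum_congr rfl
    intro B hB
    exact massEvent' N (T A ∪ T B) (Finset.union_subset (hTsub A hA) (hTsub B hB)) p
  -- variance identity
  have hVar : ∑ E ∈ N.powerset, w E * (X E - μ)^2
      = ∑ A ∈ 𝒜, ∑ B ∈ 𝒜, (p ^ (T A ∪ T B).card - p ^ (2*f)) := by
    have hmu' : ∑ E ∈ N.powerset, w E * X E = μ := by rw [hμ, rExp]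
    have expand : ∀ E ∈ N.powerset, w E * (X E - μ)^2
        = w E * (X E)^2 - 2*μ*(w E * X E) + μ^2 * w E := by intro E _; ring
    rw [Finset.sum_congr rfl expand]
    rw [Finset.sum_add_distrib, Finset.sum_sub_distrib, ← Finset.mul_sum, ← Finset.mul_sum,
      hwsum, hmu', hEX2]
    have hp2f : ∑ A ∈ 𝒜, ∑ B ∈ 𝒜, (p:ℝ) ^ (2*f) = (𝒜.card:ℝ)^2 * p ^ (2*f) := by
      simp [Finset.sum_const, nsmul_eq_mul]; ring
    have hmusq : μ^2 = (𝒜.card:ℝ)^2 * p ^ (2*f) := by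
      rw [hmu, two_mul, pow_add]; ring
    have hr : ∑ A ∈ 𝒜, ∑ B ∈ 𝒜, (p ^ (T A ∪ T B).card - p ^ (2*f))
        = (∑ A ∈ 𝒜, ∑ B ∈ 𝒜, p ^ (T A ∪ T B).card) - (𝒜.card:ℝ)^2 * p^(2*f) := by
      simp only [Finset.sum_sub_distrib]
      rw [hp2f]
    rw [hr, ← hmusq]
    ring
  -- Chebyshev
  have hCheb : rProb n k p (fun E => 2 * rExp n k p X ≤ X E)
      ≤ (∑ E ∈ N.powerset, w E * (X E - μ)^2) / μ^2 := by
    have key : ∀ E ∈ N.powerset,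
        (if 2 * rExp n k p X ≤ X E then w E else 0) ≤ w E * (X E - μ)^2 / μ^2 := by
      intro E _
      by_cases h : 2 * rExp n k p X ≤ X E
      · rw [if_pos h]
        rw [← hμ] at h
        have h1 : μ ≤ X E - μ := by linarith
        have h2 : μ^2 ≤ (X E - μ)^2 := by nlinarith
        calc w E = w E * (μ^2/μ^2) := by
              rw [div_self (by positivity), mul_one]
          _ ≤ w E * ((X E - μ)^2/μ^2) := by
              apply mul_le_mul_of_nonneg_left _ (hw0 E)
              gcongr
          _ = w E * (X E - μ)^2 / μ^2 := by ring
      · rw [if_neg h]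
        exact div_nonneg (mul_nonneg (hw0 E) (sq_nonneg _)) (sq_nonneg _)
    rw [rProb]
    refine le_trans (Finset.sum_le_sum key) ?_
    rw [Finset.sum_div]
  -- Phi facts
  have hPhi_pos : 0 < Φ := by
    have hSne : ∃ x, x ∈ { x : ℝ | ∃ (V' : Finset (Fin s)) (E' : Finset (Finset (Fin s))),
        V' ⊆ Finset.univ ∧ E' ⊆ F ∧ E'.Nonempty ∧ (∀ e ∈ E', e ⊆ V') ∧
        x = (n : ℝ) ^ V'.card * p ^ E'.card } := by
      refine ⟨(n:ℝ)^(Finset.univ : Finset (Fin s)).card * p ^ F.card,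
        Finset.univ, F, subset_refl _, subset_refl _, Finset.card_pos.mp (hFf ▸ hf),
        fun e _ => Finset.subset_univ e, rfl⟩
    have hlb : ∀ x ∈ { x : ℝ | ∃ (V' : Finset (Fin s)) (E' : Finset (Finset (Fin s))),
        V' ⊆ Finset.univ ∧ E' ⊆ F ∧ E'.Nonempty ∧ (∀ e ∈ E', e ⊆ V') ∧
        x = (n : ℝ) ^ V'.card * p ^ E'.card }, p ^ f ≤ x := by
      rintro x ⟨V', E', _, hE'F, _, _, rfl⟩
      have h1 : (1:ℝ) ≤ (n:ℝ) ^ V'.card := one_le_pow₀ (by exact_mod_cast (by omega : 1 ≤ n))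
      have h2 : p ^ f ≤ p ^ E'.card := by
        apply pow_le_pow_of_le_one hp0.le hp1
        rw [← hFf]; exact Finset.card_le_card hE'F
      calc p ^ f ≤ p ^ E'.card := h2
        _ = 1 * p ^ E'.card := (one_mul _).symm
        _ ≤ (n:ℝ) ^ V'.card * p ^ E'.card := by
            apply mul_le_mul_of_nonneg_right h1 (by positivity)
    calc (0:ℝ) < p ^ f := pow_pos hp0 f
      _ ≤ Φ := le_csInf hSne hlb
  have hPhi_le : ∀ W : Finset (Fin s), (F.filter (fun e => e ⊆ W)).Nonempty →
      Φ ≤ (n:ℝ) ^ W.card * p ^ (F.filter (fun e => e ⊆ W)).card := by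
    intro W hW
    apply csInf_le
    · refine ⟨0, ?_⟩
      rintro x ⟨V', E', _, _, _, _, rfl⟩
      positivity
    · exact ⟨W, F.filter (fun e => e ⊆ W), Finset.subset_univ W, Finset.filter_subset _ _,
        hW, fun e he => (Finset.mem_filter.mp he).2, rfl⟩
  -- variance bound
  have hVarBound : ∑ A ∈ 𝒜, ∑ B ∈ 𝒜, (p ^ (T A ∪ T B).card - p ^ (2*f))
      ≤ (s.factorial : ℝ) * 2 ^ (2 * s) * (n : ℝ) ^ (2 * s) * p ^ (2 * f) / Φ := by
    set Wf : (Fin s → Fin n) → (Fin s → Fin n) → Finset (Fin s) :=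
      fun A B => Finset.univ.filter (fun v => B v ∈ Finset.univ.image A) with hWf
    set c : Finset (Fin s) → ℝ := fun W =>
      if (F.filter (fun e => e ⊆ W)).Nonempty
      then p ^ (2*f - (F.filter (fun e => e ⊆ W)).card) else 0 with hc
    have hc0 : ∀ W, 0 ≤ c W := by
      intro W
      simp only [hc]
      split
      · positivity
      · exact le_refl 0
    have heWle : ∀ W : Finset (Fin s), (F.filter (fun e => e ⊆ W)).card ≤ f := by
      intro W; rw [← hFf]; exact Finset.card_le_card (Finset.filter_subset _ _)
    -- pairwise bound
    have pair : ∀ A ∈ 𝒜, ∀ B ∈ 𝒜, p ^ (T A ∪ T B).card - p ^ (2*f) ≤ c (Wf A B) := by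
      intro A hA B hB
      have hiu : (T A ∪ T B).card + (T A ∩ T B).card = 2*f := by
        rw [Finset.card_union_add_card_inter, hTcard A hA, hTcard B hB]; omega
      rcases Nat.eq_zero_or_pos (T A ∩ T B).card with hzero | hpos
      · have hu : (T A ∪ T B).card = 2*f := by omega
        rw [hu, sub_self]
        exact hc0 _
      · have hsub : (T A ∩ T B)
            ⊆ (F.filter (fun e => e ⊆ Wf A B)).image (fun e => e.image B) := by
          intro c0 hc0'
          rw [Finset.mem_inter] at hc0'
          obtain ⟨hc0A, hc0B⟩ := hc0'
          simp only [hT, Finset.mem_image] at hc0A hc0B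
          obtain ⟨e, he, hce⟩ := hc0A
          obtain ⟨e', he', hce'⟩ := hc0B
          apply Finset.mem_image.mpr
          refine ⟨e', Finset.mem_filter.mpr ⟨he', ?_⟩, hce'⟩
          intro v hv
          simp only [hWf, Finset.mem_filter]
          refine ⟨Finset.mem_univ v, ?_⟩
          have hBv : B v ∈ Finset.image B e' := Finset.mem_image_of_mem B hv
          rw [hce', ← hce] at hBv
          obtain ⟨u, _, huv⟩ := Finset.mem_image.mp hBv
          exact Finset.mem_image.mpr ⟨u, Finset.mem_univ u, huv⟩
        have hfilne : (F.filter (fun e => e ⊆ Wf A B)).Nonempty := by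
          obtain ⟨c0, hc0'⟩ := Finset.card_pos.mp hpos
          obtain ⟨e', he', _⟩ := Finset.mem_image.mp (hsub hc0')
          exact ⟨e', he'⟩
        have hile : (T A ∩ T B).card ≤ (F.filter (fun e => e ⊆ Wf A B)).card :=
          le_trans (Finset.card_le_card hsub) Finset.card_image_le
        simp only [hc]
        rw [if_pos hfilne]
        have h1 : p ^ (T A ∪ T B).card
            ≤ p ^ (2*f - (F.filter (fun e => e ⊆ Wf A B)).card) := by
          apply pow_le_pow_of_le_one hp0.le hp1
          have := heWle (Wf A B)
          omega
        have h2 : (0:ℝ) ≤ p ^ (2*f) := by positivity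
        linarith
    -- fibering over W₀ for fixed A
    have fiber : ∀ A ∈ 𝒜, ∑ B ∈ 𝒜, c (Wf A B)
        ≤ ∑ W₀ ∈ (Finset.univ : Finset (Fin s)).powerset,
            ((s:ℝ)^W₀.card * (n:ℝ)^(s - W₀.card)) * c W₀ := by
      intro A hA
      have hmaps : ∀ B ∈ 𝒜, Wf A B ∈ (Finset.univ : Finset (Fin s)).powerset :=
        fun B _ => Finset.mem_powerset.mpr (Finset.subset_univ _)
      rw [← Finset.sum_fiberwise_of_maps_to hmaps (fun B => c (Wf A B))]
      apply Finset.sum_le_sum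
      intro W₀ _
      have hconst : ∀ B ∈ 𝒜.filter (fun B => Wf A B = W₀), c (Wf A B) = c W₀ := by
        intro B hB
        rw [(Finset.mem_filter.mp hB).2]
      rw [Finset.sum_congr rfl hconst, Finset.sum_const, nsmul_eq_mul]
      apply mul_le_mul_of_nonneg_right _ (hc0 W₀)
      have hsubpi : 𝒜.filter (fun B => Wf A B = W₀)
          ⊆ Fintype.piFinset
              (fun v => if v ∈ W₀ then Finset.univ.image A else Finset.univ) := by
        intro B hB
        rw [Finset.mem_filter] at hB
        rw [Fintype.mem_piFinset]
        intro v
        by_cases hv : v ∈ W₀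
        · rw [if_pos hv]
          have hvW : v ∈ Wf A B := hB.2 ▸ hv
          simp only [hWf, Finset.mem_filter] at hvW
          exact hvW.2
        · rw [if_neg hv]; exact Finset.mem_univ _
      calc ((𝒜.filter (fun B => Wf A B = W₀)).card : ℝ)
          ≤ ((Fintype.piFinset
              (fun v => if v ∈ W₀ then Finset.univ.image A else Finset.univ)).card : ℝ) := by
            exact_mod_cast Finset.card_le_card hsubpi
        _ = (s:ℝ)^W₀.card * (n:ℝ)^(s - W₀.card) := by
            rw [Fintype.card_piFinset]
            have hcards : ∀ v : Fin s,
                ((if v ∈ W₀ then Finset.univ.image A else Finset.univ) : Finset (Fin n)).card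
                = if v ∈ W₀ then s else n := by
              intro v
              by_cases hv : v ∈ W₀
              · rw [if_pos hv, if_pos hv, Finset.card_image_of_injective _ (h𝒜 A hA)]
                simp
              · rw [if_neg hv, if_neg hv]
                simp
            rw [Finset.prod_congr rfl (fun v _ => hcards v), prod_ite_card']
            push_cast
            simp
    -- per-W₀ bound
    have perW : ∀ W₀ ∈ (Finset.univ : Finset (Fin s)).powerset,
        (n:ℝ)^s * (((s:ℝ)^W₀.card * (n:ℝ)^(s - W₀.card)) * c W₀)
          ≤ (s:ℝ)^W₀.card * ((n:ℝ)^(2*s) * p^(2*f) / Φ) := by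
      intro W₀ hW₀
      have hwle : W₀.card ≤ s := by
        have := Finset.card_le_card (Finset.mem_powerset.mp hW₀)
        simpa using this
      simp only [hc]
      split
      case isTrue h =>
        have hΦle := hPhi_le W₀ h
        have heW := heWle W₀
        set e' : ℕ := (F.filter (fun e => e ⊆ W₀)).card with he'
        have key : (n:ℝ)^(2*s - W₀.card) * p^(2*f - e') ≤ (n:ℝ)^(2*s) * p^(2*f) / Φ := by
          rw [le_div_iff₀ hPhi_pos]
          calc (n:ℝ)^(2*s - W₀.card) * p^(2*f - e') * Φ
              ≤ (n:ℝ)^(2*s - W₀.card) * p^(2*f - e') * ((n:ℝ)^W₀.card * p^e') := by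
                apply mul_le_mul_of_nonneg_left hΦle (by positivity)
            _ = (n:ℝ)^(2*s - W₀.card + W₀.card) * p^(2*f - e' + e') := by
                rw [pow_add, pow_add]; ring
            _ = (n:ℝ)^(2*s) * p^(2*f) := by
                congr 1
                · congr 1; omega
                · congr 1; omega
        calc (n:ℝ)^s * (((s:ℝ)^W₀.card * (n:ℝ)^(s - W₀.card)) * p^(2*f - e'))
            = (s:ℝ)^W₀.card * ((n:ℝ)^(s + (s - W₀.card)) * p^(2*f - e')) := by
              rw [pow_add]; ring
          _ = (s:ℝ)^W₀.card * ((n:ℝ)^(2*s - W₀.card) * p^(2*f - e')) := by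
              congr 3
              omega
          _ ≤ (s:ℝ)^W₀.card * ((n:ℝ)^(2*s) * p^(2*f) / Φ) := by
              apply mul_le_mul_of_nonneg_left key (by positivity)
      case isFalse h =>
        rw [mul_zero, mul_zero]
        have : (0:ℝ) ≤ (n:ℝ)^(2*s) * p^(2*f) / Φ := by positivity
        positivity
    -- sum of s^card over powerset
    have hsum_pow : ∑ W₀ ∈ (Finset.univ : Finset (Fin s)).powerset, (s:ℝ)^W₀.card
        = ((s:ℝ)+1)^s := by
      have h := Finset.prod_add (fun _ : Fin s => (s:ℝ)) (fun _ => (1:ℝ)) Finset.univ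
      simp only [Finset.prod_const, Finset.card_univ, Fintype.card_fin, one_pow,
        mul_one] at h
      exact h.symm
    have hcard𝒜 : (𝒜.card : ℝ) ≤ (n:ℝ)^s := by
      have h1 : 𝒜.card ≤ Fintype.card (Fin s → Fin n) := Finset.card_le_univ 𝒜
      have h2 : Fintype.card (Fin s → Fin n) = n^s := by
        simp [Fintype.card_fun]
      rw [h2] at h1
      exact_mod_cast h1
    have hinnsum : (0:ℝ) ≤ ∑ W₀ ∈ (Finset.univ : Finset (Fin s)).powerset,
        ((s:ℝ)^W₀.card * (n:ℝ)^(s - W₀.card)) * c W₀ := by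
      apply Finset.sum_nonneg
      intro W₀ _
      exact mul_nonneg (by positivity) (hc0 W₀)
    have h4s : (2:ℝ)^(2*s) = 4^s := by
      rw [pow_mul]; norm_num
    calc ∑ A ∈ 𝒜, ∑ B ∈ 𝒜, (p ^ (T A ∪ T B).card - p ^ (2*f))
        ≤ ∑ A ∈ 𝒜, ∑ B ∈ 𝒜, c (Wf A B) := by
          apply Finset.sum_le_sum
          intro A hA
          exact Finset.sum_le_sum (fun B hB => pair A hA B hB)
      _ ≤ ∑ A ∈ 𝒜, ∑ W₀ ∈ (Finset.univ : Finset (Fin s)).powerset,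
            ((s:ℝ)^W₀.card * (n:ℝ)^(s - W₀.card)) * c W₀ :=
          Finset.sum_le_sum fiber
      _ = (𝒜.card : ℝ) * ∑ W₀ ∈ (Finset.univ : Finset (Fin s)).powerset,
            ((s:ℝ)^W₀.card * (n:ℝ)^(s - W₀.card)) * c W₀ := by
          rw [Finset.sum_const, nsmul_eq_mul]
      _ ≤ (n:ℝ)^s * ∑ W₀ ∈ (Finset.univ : Finset (Fin s)).powerset,
            ((s:ℝ)^W₀.card * (n:ℝ)^(s - W₀.card)) * c W₀ :=
          mul_le_mul_of_nonneg_right hcard𝒜 hinnsum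
      _ = ∑ W₀ ∈ (Finset.univ : Finset (Fin s)).powerset,
            (n:ℝ)^s * (((s:ℝ)^W₀.card * (n:ℝ)^(s - W₀.card)) * c W₀) := by
          rw [Finset.mul_sum]
      _ ≤ ∑ W₀ ∈ (Finset.univ : Finset (Fin s)).powerset,
            (s:ℝ)^W₀.card * ((n:ℝ)^(2*s) * p^(2*f) / Φ) :=
          Finset.sum_le_sum perW
      _ = ((s:ℝ)+1)^s * ((n:ℝ)^(2*s) * p^(2*f) / Φ) := by
          rw [← Finset.sum_mul, hsum_pow]
      _ ≤ ((s.factorial:ℝ) * 4^s) * ((n:ℝ)^(2*s) * p^(2*f) / Φ) := by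
          apply mul_le_mul_of_nonneg_right (aux_fac' s) (by positivity)
      _ = (s.factorial : ℝ) * 2 ^ (2 * s) * (n : ℝ) ^ (2 * s) * p ^ (2 * f) / Φ := by
          rw [h4s]; ring

  -- combine
  have hfinal : (∑ E ∈ N.powerset, w E * (X E - μ)^2) / μ^2
      ≤ (s.factorial : ℝ) * 2 ^ (2 * s) * (n : ℝ) ^ (2 * s) * p ^ (2 * f) / (μ^2 * Φ) := by
    rw [hVar]
    rw [div_le_div_iff₀ (by positivity) (by positivity)]
    calc (∑ A ∈ 𝒜, ∑ B ∈ 𝒜, (p ^ (T A ∪ T B).card - p ^ (2*f))) * (μ^2 * Φ)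
        = ((∑ A ∈ 𝒜, ∑ B ∈ 𝒜, (p ^ (T A ∪ T B).card - p ^ (2*f))) * Φ) * μ^2 := by ring
      _ ≤ ((s.factorial : ℝ) * 2 ^ (2 * s) * (n : ℝ) ^ (2 * s) * p ^ (2 * f)) * μ^2 := by
          apply mul_le_mul_of_nonneg_right _ (by positivity)
          rw [← le_div_iff₀ hPhi_pos]
          exact hVarBound
  exact le_trans hCheb hfinal
end

section
/- Let F₁ and F₂ be labelled k-graphs, each with at least one edge, such that V(F₁) ∩ V(F₂) = {v} for a single vertex v. Then for every n ≥ 1 and every p with 0 < p ≤ 1, Φ_{F₁∪F₂}(n,p) ≥ min{ Φ_{F₁}(n,p), Φ_{F₂}(n,p), Φ_{F₁}(n,p)·Φ_{F₂}(n,p)·n^{−1} }. -/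
open Finset Filter Topology

/-- Auxiliary: the defining set of `Phi` is bounded below by 0 when `0 ≤ p`. -/
lemma phiSet_bddBelow {α : Type*} (Vset : Finset α) (F : Finset (Finset α)) (n : ℕ)
    (p : ℝ) (hp : 0 ≤ p) :
    BddBelow { x : ℝ | ∃ (V' : Finset α) (E' : Finset (Finset α)), V' ⊆ Vset ∧ E' ⊆ F ∧
      E'.Nonempty ∧ (∀ e ∈ E', e ⊆ V') ∧ x = (n : ℝ) ^ V'.card * p ^ E'.card } := by
  refine ⟨0, fun x hx => ?_⟩
  obtain ⟨V', E', _, _, _, _, rfl⟩ := hx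
  positivity

/-- Proposition 2.2. Let `F₁`, `F₂` be labelled `k`-graphs with
`V(F₁) ∩ V(F₂) = {v}`. Then `Φ_{F₁∪F₂} ≥ min{Φ_{F₁}, Φ_{F₂}, Φ_{F₁} Φ_{F₂} n^{-1}}`. -/
theorem Phi_union_ge
    {α : Type*} [DecidableEq α] (k : ℕ) (hk : 2 ≤ k)
    (V1 V2 : Finset α) (E1 E2 : Finset (Finset α))
    (h1 : ∀ e ∈ E1, e ⊆ V1 ∧ e.card = k) (h2 : ∀ e ∈ E2, e ⊆ V2 ∧ e.card = k)
    (hne1 : E1.Nonempty) (hne2 : E2.Nonempty)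
    (v : α) (hV : V1 ∩ V2 = {v})
    (n : ℕ) (hn : 1 ≤ n) (p : ℝ) (hp0 : 0 < p) (hp1 : p ≤ 1) :
    min (min (Phi V1 E1 n p) (Phi V2 E2 n p)) (Phi V1 E1 n p * Phi V2 E2 n p / n) ≤
      Phi (V1 ∪ V2) (E1 ∪ E2) n p := by
    classical
  have hpnn : (0:ℝ) ≤ p := hp0.le
  have hn1 : (1:ℝ) ≤ (n:ℝ) := by exact_mod_cast hn
  have hnpos : (0:ℝ) < (n:ℝ) := lt_of_lt_of_le one_pos hn1
  have hle : ∀ (W : Finset α) (F : Finset (Finset α)) (V' : Finset α)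
      (E' : Finset (Finset α)), V' ⊆ W → E' ⊆ F → E'.Nonempty → (∀ e ∈ E', e ⊆ V') →
      Phi W F n p ≤ (n : ℝ) ^ V'.card * p ^ E'.card := by
    intro W F V' E' a b c d
    exact csInf_le (phiSet_bddBelow W F n p hpnn) ⟨V', E', a, b, c, d, rfl⟩
  have h1nn : 0 ≤ Phi V1 E1 n p := by
    refine le_csInf ⟨_, ⟨V1, E1, subset_rfl, subset_rfl, hne1,
      fun e he => (h1 e he).1, rfl⟩⟩ ?_
    rintro x ⟨V', E', -, -, -, -, rfl⟩
    positivity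
  have h2nn : 0 ≤ Phi V2 E2 n p := by
    refine le_csInf ⟨_, ⟨V2, E2, subset_rfl, subset_rfl, hne2,
      fun e he => (h2 e he).1, rfl⟩⟩ ?_
    rintro x ⟨V', E', -, -, -, -, rfl⟩
    positivity
  have hdisj : Disjoint E1 E2 := by
    rw [Finset.disjoint_left]
    intro e he1 he2
    have hsubv : e ⊆ {v} := by
      rw [← hV]; exact Finset.subset_inter (h1 e he1).1 (h2 e he2).1
    have hc1 := Finset.card_le_card hsubv
    have hc2 := (h1 e he1).2
    simp only [Finset.card_singleton] at hc1
    omega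
  refine le_csInf ⟨_, ⟨V1 ∪ V2, E1 ∪ E2, subset_rfl, subset_rfl,
    hne1.mono Finset.subset_union_left, ?_, rfl⟩⟩ ?_
  · intro e he
    rcases Finset.mem_union.1 he with h | h
    · exact (h1 e h).1.trans Finset.subset_union_left
    · exact (h2 e h).1.trans Finset.subset_union_right
  rintro x ⟨V', E', hV', hE', hEne, hsub, rfl⟩
  rcases em (E' ∩ E1).Nonempty with hA | hA <;> rcases em (E' ∩ E2).Nonempty with hB | hB
  · -- both nonempty: use the product bound
    have hABun : E' ∩ E1 ∪ E' ∩ E2 = E' := by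
      rw [← Finset.inter_union_distrib_left]
      exact Finset.inter_eq_left.2 hE'
    have hABdisj : Disjoint (E' ∩ E1) (E' ∩ E2) :=
      hdisj.mono Finset.inter_subset_right Finset.inter_subset_right
    have hcardE : (E' ∩ E1).card + (E' ∩ E2).card = E'.card := by
      rw [← Finset.card_union_of_disjoint hABdisj, hABun]
    have hVab : (V' ∩ V1).card + (V' ∩ V2).card ≤ V'.card + 1 := by
      have hu : (V' ∩ V1) ∪ (V' ∩ V2) ⊆ V' :=
        Finset.union_subset Finset.inter_subset_left Finset.inter_subset_left
      have hi : (V' ∩ V1) ∩ (V' ∩ V2) ⊆ {v} := by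
        intro y hy
        simp only [Finset.mem_inter] at hy
        rw [← hV]; exact Finset.mem_inter.2 ⟨hy.1.2, hy.2.2⟩
      have hci := Finset.card_inter_add_card_union (V' ∩ V1) (V' ∩ V2)
      have hcu := Finset.card_le_card hu
      have hcl := Finset.card_le_card hi
      simp only [Finset.card_singleton] at hcl
      omega
    have hb1 : Phi V1 E1 n p ≤ (n : ℝ) ^ (V' ∩ V1).card * p ^ (E' ∩ E1).card := by
      refine hle V1 E1 (V' ∩ V1) (E' ∩ E1) Finset.inter_subset_right
        Finset.inter_subset_right hA ?_
      intro e he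
      rcases Finset.mem_inter.1 he with ⟨he', he1⟩
      exact Finset.subset_inter (hsub e he') (h1 e he1).1
    have hb2 : Phi V2 E2 n p ≤ (n : ℝ) ^ (V' ∩ V2).card * p ^ (E' ∩ E2).card := by
      refine hle V2 E2 (V' ∩ V2) (E' ∩ E2) Finset.inter_subset_right
        Finset.inter_subset_right hB ?_
      intro e he
      rcases Finset.mem_inter.1 he with ⟨he', he2⟩
      exact Finset.subset_inter (hsub e he') (h2 e he2).1
    have hprod : Phi V1 E1 n p * Phi V2 E2 n p ≤
        ((n : ℝ) ^ (V' ∩ V1).card * p ^ (E' ∩ E1).card) *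
        ((n : ℝ) ^ (V' ∩ V2).card * p ^ (E' ∩ E2).card) :=
      mul_le_mul hb1 hb2 h2nn (by positivity)
    have hfin : ((n : ℝ) ^ (V' ∩ V1).card * p ^ (E' ∩ E1).card) *
          ((n : ℝ) ^ (V' ∩ V2).card * p ^ (E' ∩ E2).card) / n
        ≤ (n : ℝ) ^ V'.card * p ^ E'.card := by
      rw [div_le_iff₀ hnpos]
      have hnp : (n : ℝ) ^ ((V' ∩ V1).card + (V' ∩ V2).card) ≤ (n : ℝ) ^ (V'.card + 1) :=
        pow_le_pow_right₀ hn1 hVab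
      calc ((n : ℝ) ^ (V' ∩ V1).card * p ^ (E' ∩ E1).card) *
            ((n : ℝ) ^ (V' ∩ V2).card * p ^ (E' ∩ E2).card)
          = (n : ℝ) ^ ((V' ∩ V1).card + (V' ∩ V2).card) * p ^ E'.card := by
            rw [pow_add, ← hcardE, pow_add]; ring
        _ ≤ (n : ℝ) ^ (V'.card + 1) * p ^ E'.card :=
            mul_le_mul_of_nonneg_right hnp (by positivity)
        _ = (n : ℝ) ^ V'.card * p ^ E'.card * n := by rw [pow_succ]; ring
    exact (min_le_right _ _).trans (((div_le_div_iff_of_pos_right hnpos).2 hprod).trans hfin)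
  · -- E' ⊆ E1
    have hE'1 : E' ⊆ E1 := by
      intro e he
      rcases Finset.mem_union.1 (hE' he) with h | h
      · exact h
      · exact absurd ⟨e, Finset.mem_inter.2 ⟨he, h⟩⟩ hB
    have hb1 : Phi V1 E1 n p ≤ (n : ℝ) ^ (V' ∩ V1).card * p ^ E'.card := by
      refine hle V1 E1 (V' ∩ V1) E' Finset.inter_subset_right hE'1 hEne ?_
      intro e he
      exact Finset.subset_inter (hsub e he) (h1 e (hE'1 he)).1
    have hmono : (n : ℝ) ^ (V' ∩ V1).card * p ^ E'.card ≤ (n : ℝ) ^ V'.card * p ^ E'.card :=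
      mul_le_mul_of_nonneg_right
        (pow_le_pow_right₀ hn1 (Finset.card_le_card Finset.inter_subset_left))
        (by positivity)
    exact ((min_le_left _ _).trans (min_le_left _ _)).trans (hb1.trans hmono)
  · -- E' ⊆ E2
    have hE'2 : E' ⊆ E2 := by
      intro e he
      rcases Finset.mem_union.1 (hE' he) with h | h
      · exact absurd ⟨e, Finset.mem_inter.2 ⟨he, h⟩⟩ hA
      · exact h
    have hb2 : Phi V2 E2 n p ≤ (n : ℝ) ^ (V' ∩ V2).card * p ^ E'.card := by
      refine hle V2 E2 (V' ∩ V2) E' Finset.inter_subset_right hE'2 hEne ?_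
      intro e he
      exact Finset.subset_inter (hsub e he) (h2 e (hE'2 he)).1
    have hmono : (n : ℝ) ^ (V' ∩ V2).card * p ^ E'.card ≤ (n : ℝ) ^ V'.card * p ^ E'.card :=
      mul_le_mul_of_nonneg_right
        (pow_le_pow_right₀ hn1 (Finset.card_le_card Finset.inter_subset_left))
        (by positivity)
    exact ((min_le_left _ _).trans (min_le_right _ _)).trans (hb2.trans hmono)
  · -- impossible
    obtain ⟨e, he⟩ := hEne
    rcases Finset.mem_union.1 (hE' he) with h | h
    · exact absurd ⟨e, Finset.mem_inter.2 ⟨he, h⟩⟩ hA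
    · exact absurd ⟨e, Finset.mem_inter.2 ⟨he, h⟩⟩ hB
end

section
/- Let c ≥ 1 and let F be a labelled k-graph with b vertices and at least one edge. If n ≥ 1, 0 < p ≤ 1 and Φ_F(n,p) ≥ c·n, then Φ_A(n,p) ≥ c·n for every A ∈ 𝒜(F). -/
open Finset Filter Topology

/-- Lemma 2.3. Let `c ≥ 1` and let `F` be a labelled `k`-graph with
`b` vertices and at least one edge. If `Φ_F(n,p) ≥ c n`, then `Φ_A(n,p) ≥ c n` for every
`A ∈ 𝒜(F)`, where `A` is composed of copies `F', F₁, …, F_b` of `F` (given by embeddings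
`g 0, g 1, …, g b`) such that `V(F₁), …, V(F_b)` are pairwise disjoint and
`|V(F') ∩ V(Fᵢ)| = 1` for all `i ∈ [b]`. -/
theorem Phi_absorber_ge
    {α : Type*} [DecidableEq α] (k : ℕ) (hk : 2 ≤ k) (b : ℕ)
    (F : Finset (Finset (Fin b))) (hF : ∀ e ∈ F, e.card = k) (hFne : F.Nonempty)
    (c : ℝ) (hc : 1 ≤ c) (n : ℕ) (hn : 1 ≤ n) (p : ℝ) (hp0 : 0 < p) (hp1 : p ≤ 1)
    (hPhi : c * n ≤ Phi (Finset.univ : Finset (Fin b)) F n p)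
    (g : Fin (b + 1) → Fin b → α)
    (hinj : ∀ i, Function.Injective (g i))
    (hdisj : ∀ i j : Fin (b + 1), i ≠ j → i ≠ 0 → j ≠ 0 →
      Disjoint (Finset.univ.image (g i)) (Finset.univ.image (g j)))
    (hmeet : ∀ i : Fin (b + 1), i ≠ 0 →
      ((Finset.univ.image (g 0)) ∩ (Finset.univ.image (g i))).card = 1) :
    c * n ≤ Phi (Finset.univ.biUnion fun i => Finset.univ.image (g i))
      (Finset.univ.biUnion fun i => F.image fun e => e.image (g i)) n p := by
  classical
  have hn1 : (1 : ℝ) ≤ (n : ℝ) := by exact_mod_cast hn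
  have hn0 : (0 : ℝ) < (n : ℝ) := lt_of_lt_of_le one_pos hn1
  -- bddBelow of the Phi set for F
  have hbdd : BddBelow { x : ℝ | ∃ (V' : Finset (Fin b)) (E' : Finset (Finset (Fin b))),
      V' ⊆ (Finset.univ : Finset (Fin b)) ∧ E' ⊆ F ∧ E'.Nonempty ∧ (∀ e ∈ E', e ⊆ V') ∧
      x = (n : ℝ) ^ V'.card * p ^ E'.card } := by
    refine ⟨0, ?_⟩
    rintro x ⟨V', E', -, -, -, -, rfl⟩
    positivity
  unfold Phi at hPhi ⊢
  refine le_csInf ?_ ?_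
  · -- nonemptiness of the Phi set for A
    refine ⟨_, Set.mem_setOf.2 ⟨Finset.univ.biUnion fun i => Finset.univ.image (g i),
      Finset.univ.biUnion fun i => F.image fun e => e.image (g i),
      subset_rfl, subset_rfl, ?_, ?_, rfl⟩⟩
    · obtain ⟨e, he⟩ := hFne
      exact ⟨e.image (g 0), Finset.mem_biUnion.2
        ⟨0, Finset.mem_univ _, Finset.mem_image_of_mem _ he⟩⟩
    · intro e he
      obtain ⟨i, -, he⟩ := Finset.mem_biUnion.1 he
      obtain ⟨f, -, rfl⟩ := Finset.mem_image.1 he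
      intro x hx
      obtain ⟨y, -, rfl⟩ := Finset.mem_image.1 hx
      exact Finset.mem_biUnion.2
        ⟨i, Finset.mem_univ _, Finset.mem_image_of_mem _ (Finset.mem_univ _)⟩
  rintro x ⟨V', E', hV', hE', hE'ne, hEV, rfl⟩
  -- pull back the edge set along each copy
  set Et : Fin (b + 1) → Finset (Finset (Fin b)) :=
    fun i => F.filter fun e => e.image (g i) ∈ E' with hEt
  set Wt : Fin (b + 1) → Finset (Fin b) := fun i => (Et i).biUnion id with hWt
  set W : Fin (b + 1) → Finset α := fun i => (Wt i).image (g i) with hWdef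
  set I : Finset (Fin (b + 1)) := Finset.univ.filter fun i => (Et i).Nonempty with hI
  set m := I.card with hm
  -- each nonempty pullback gives a subgraph of F, so obeys the hypothesis
  have key : ∀ i ∈ I, c * n ≤ (n : ℝ) ^ (Wt i).card * p ^ (Et i).card := by
    intro i hi
    refine hPhi.trans (csInf_le hbdd ?_)
    refine ⟨Wt i, Et i, Finset.subset_univ _, Finset.filter_subset _ _,
      (Finset.mem_filter.1 hi).2, ?_, rfl⟩
    intro e he x hx
    exact Finset.mem_biUnion.2 ⟨e, he, hx⟩
  have hWcard : ∀ i, (W i).card = (Wt i).card := fun i =>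
    Finset.card_image_of_injective _ (hinj i)
  have hWV : ∀ i, W i ⊆ V' := by
    intro i x hx
    obtain ⟨y, hy, rfl⟩ := Finset.mem_image.1 hx
    obtain ⟨e, he, hye⟩ := Finset.mem_biUnion.1 hy
    exact hEV _ (Finset.mem_filter.1 he).2 (Finset.mem_image_of_mem _ hye)
  have hWimg : ∀ i, W i ⊆ Finset.univ.image (g i) := fun i =>
    Finset.image_subset_image (Finset.subset_univ _)
  have hdisjW : ∀ i j : Fin (b + 1), i ≠ j → i ≠ 0 → j ≠ 0 → Disjoint (W i) (W j) :=
    fun i j hij hi hj => (hdisj i j hij hi hj).mono (hWimg i) (hWimg j)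
  have hmeetW : ∀ i : Fin (b + 1), i ≠ 0 → (W i ∩ W 0).card ≤ 1 := by
    intro i hi
    calc (W i ∩ W 0).card
        ≤ ((Finset.univ.image (g i)) ∩ (Finset.univ.image (g 0))).card :=
          Finset.card_le_card (Finset.inter_subset_inter (hWimg i) (hWimg 0))
      _ = 1 := by rw [Finset.inter_comm]; exact hmeet i hi
  -- `I` is nonempty
  have hIne : I.Nonempty := by
    obtain ⟨e, he⟩ := hE'ne
    obtain ⟨i, -, hei⟩ := Finset.mem_biUnion.1 (hE' he)
    obtain ⟨f, hf, rfl⟩ := Finset.mem_image.1 hei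
    exact ⟨i, Finset.mem_filter.2 ⟨Finset.mem_univ _, ⟨f, Finset.mem_filter.2 ⟨hf, he⟩⟩⟩⟩
  have hm1 : 1 ≤ m := Finset.card_pos.2 hIne
  -- edge count: E' is covered by the images of the pullbacks
  have hEcount : E'.card ≤ ∑ i ∈ I, (Et i).card := by
    have hsub : E' ⊆ I.biUnion fun i => (Et i).image fun e => e.image (g i) := by
      intro e he
      obtain ⟨i, -, hei⟩ := Finset.mem_biUnion.1 (hE' he)
      obtain ⟨f, hf, rfl⟩ := Finset.mem_image.1 hei
      have hfi : f ∈ Et i := Finset.mem_filter.2 ⟨hf, he⟩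
      exact Finset.mem_biUnion.2 ⟨i, Finset.mem_filter.2 ⟨Finset.mem_univ _, ⟨f, hfi⟩⟩,
        Finset.mem_image_of_mem _ hfi⟩
    calc E'.card ≤ (I.biUnion fun i => (Et i).image fun e => e.image (g i)).card :=
          Finset.card_le_card hsub
      _ ≤ ∑ i ∈ I, ((Et i).image fun e => e.image (g i)).card := Finset.card_biUnion_le
      _ ≤ ∑ i ∈ I, (Et i).card := Finset.sum_le_sum fun i _ => Finset.card_image_le
  -- vertex count
  have hVcount : ∑ i ∈ I, (Wt i).card ≤ V'.card + (m - 1) := by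
    have hWc : ∑ i ∈ I, (Wt i).card = ∑ i ∈ I, (W i).card := by
      exact Finset.sum_congr rfl fun i _ => (hWcard i).symm
    rw [hWc]
    by_cases h0 : (0 : Fin (b + 1)) ∈ I
    · set J := I.erase 0 with hJ
      have hJcard : J.card = m - 1 := Finset.card_erase_of_mem h0
      have hsplit : ∑ i ∈ I, (W i).card = (W 0).card + ∑ i ∈ J, (W i).card :=
        (Finset.add_sum_erase I _ h0).symm
      have hJle : ∀ i ∈ J, (W i).card ≤ (W i \ W 0).card + 1 := by
        intro i hiJ
        have hi0 : i ≠ 0 := Finset.ne_of_mem_erase hiJ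
        calc (W i).card = (W i \ W 0).card + (W i ∩ W 0).card :=
              (Finset.card_sdiff_add_card_inter _ _).symm
          _ ≤ (W i \ W 0).card + 1 := by
              exact Nat.add_le_add_left (hmeetW i hi0) _
      have hdisjoint : (W 0 ∪ J.biUnion fun i => W i \ W 0).card =
          (W 0).card + ∑ i ∈ J, (W i \ W 0).card := by
        rw [Finset.card_union_of_disjoint, Finset.card_biUnion]
        · intro i hiJ j hjJ hij
          exact (hdisjW i j hij (Finset.ne_of_mem_erase hiJ)
            (Finset.ne_of_mem_erase hjJ)).mono Finset.sdiff_subset Finset.sdiff_subset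
        · rw [Finset.disjoint_biUnion_right]
          intro i hiJ
          exact Finset.disjoint_sdiff
      have hsubV : W 0 ∪ (J.biUnion fun i => W i \ W 0) ⊆ V' := by
        refine Finset.union_subset (hWV 0) ?_
        refine Finset.biUnion_subset.2 fun i _ => ?_
        exact Finset.sdiff_subset.trans (hWV i)
      calc ∑ i ∈ I, (W i).card
          = (W 0).card + ∑ i ∈ J, (W i).card := hsplit
        _ ≤ (W 0).card + ∑ i ∈ J, ((W i \ W 0).card + 1) :=
            Nat.add_le_add_left (Finset.sum_le_sum hJle) _
        _ = ((W 0).card + ∑ i ∈ J, (W i \ W 0).card) + J.card := by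
            rw [Finset.sum_add_distrib, Finset.sum_const, smul_eq_mul, mul_one]
            ring
        _ = (W 0 ∪ J.biUnion fun i => W i \ W 0).card + (m - 1) := by
            rw [hdisjoint, hJcard]
        _ ≤ V'.card + (m - 1) :=
            Nat.add_le_add_right (Finset.card_le_card hsubV) _
    · have hdis : ∀ i ∈ I, ∀ j ∈ I, i ≠ j → Disjoint (W i) (W j) := by
        intro i hi j hj hij
        exact hdisjW i j hij (fun h => h0 (h ▸ hi)) (fun h => h0 (h ▸ hj))
      calc ∑ i ∈ I, (W i).card = (I.biUnion W).card := (Finset.card_biUnion hdis).symm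
        _ ≤ V'.card := Finset.card_le_card (Finset.biUnion_subset.2 fun i _ => hWV i)
        _ ≤ V'.card + (m - 1) := Nat.le_add_right _ _
  -- put it together
  have hprod : (c * n) ^ m ≤ ∏ i ∈ I, ((n : ℝ) ^ (Wt i).card * p ^ (Et i).card) := by
    rw [← Finset.prod_const]
    refine Finset.prod_le_prod (fun i _ => ?_) key
    positivity
  have hprodeq : ∏ i ∈ I, ((n : ℝ) ^ (Wt i).card * p ^ (Et i).card) =
      (n : ℝ) ^ (∑ i ∈ I, (Wt i).card) * p ^ (∑ i ∈ I, (Et i).card) := by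
    rw [Finset.prod_mul_distrib, Finset.prod_pow_eq_pow_sum, Finset.prod_pow_eq_pow_sum]
  have hstep : (n : ℝ) ^ (∑ i ∈ I, (Wt i).card) * p ^ (∑ i ∈ I, (Et i).card) ≤
      (n : ℝ) ^ (V'.card + (m - 1)) * p ^ E'.card := by
    refine mul_le_mul (pow_le_pow_right₀ hn1 hVcount)
      (pow_le_pow_of_le_one hp0.le hp1 hEcount) (by positivity) (by positivity)
  have hchain : c * n * (n : ℝ) ^ (m - 1) ≤
      ((n : ℝ) ^ V'.card * p ^ E'.card) * (n : ℝ) ^ (m - 1) := by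
    have hmm : m - 1 + 1 = m := Nat.succ_pred_eq_of_pos hm1
    calc c * n * (n : ℝ) ^ (m - 1) = c * (n : ℝ) ^ m := by
          rw [mul_assoc, ← pow_succ', hmm]
      _ ≤ c ^ m * (n : ℝ) ^ m := by
          refine mul_le_mul_of_nonneg_right (le_self_pow₀ hc (Nat.one_le_iff_ne_zero.1 hm1)) ?_
          positivity
      _ = (c * n) ^ m := (mul_pow _ _ _).symm
      _ ≤ ∏ i ∈ I, ((n : ℝ) ^ (Wt i).card * p ^ (Et i).card) := hprod
      _ = (n : ℝ) ^ (∑ i ∈ I, (Wt i).card) * p ^ (∑ i ∈ I, (Et i).card) := hprodeq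
      _ ≤ (n : ℝ) ^ (V'.card + (m - 1)) * p ^ E'.card := hstep
      _ = ((n : ℝ) ^ V'.card * p ^ E'.card) * (n : ℝ) ^ (m - 1) := by
          rw [pow_add]; ring
  exact le_of_mul_le_mul_right hchain (by positivity)
end

section
/- Let F be a labelled k-graph with b vertices and f > 0 edges and let λ > 0. There exist c > 0 and n₀ such that for all n ≥ n₀ the following holds. Let V be an n-vertex set and let ℱ be a family of λ·n^b ordered b-subsets of V. If p = p(n) satisfies Φ_F(n,p) ≥ c·n, then for H = H^{(k)}(n,p) on V: (i) with probability at least 1 − exp(−n), every induced subgraph of H on λ·n vertices contains a copy of F; (ii) with probability at least 1 − exp(−n), at least (λ/2)·n^b·p^f of the ordered b-sets in ℱ span labelled copies of F in H. -/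
open Finset Filter Topology

/-!
Both parts follow from Janson's inequality for the number `X` of copies of `F` spanned by a
family `𝒢` of embeddings: `P(X ≤ (1 - θ) 𝔼X) ≤ exp(-θ² (𝔼X)² / (2Δ̄))`. Grouping the
overlapping pairs of copies by the subgraph `F'` of `F` they share gives
`Δ̄ Φ_F ≤ |𝒢| 2^f (b+1)^b n^b p^{2f}`, so the exponent is at least
`θ² |𝒢| Φ_F / (2^{f+1} (b+1)^b n^b)`, which is of order `n` once `|𝒢| = Θ(n^b)` and
`Φ_F ≥ c n`. Part (ii) takes `𝒢 = ℱ` and `θ = 1/2`. Part (i) takes, for each set `S` of size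
`λ n`, all embeddings into `S` and `θ = 1`, which fails with probability at most `e^{-2n}`,
and a union bound over the at most `2^n` sets `S`.

Janson's inequality itself is derived from Harris' inequality for the product measure, through
a differential inequality for the Laplace transform of `X`.
-/

noncomputable section

namespace RandomSubset

variable {α : Type*}

def weight (p : ℝ) (T E : Finset α) : ℝ := p ^ #E * (1 - p) ^ (#T - #E)

def expect (p : ℝ) (T : Finset α) (g : Finset α → ℝ) : ℝ :=
  ∑ E ∈ T.powerset, weight p T E * g E

open Classical in
def prob (p : ℝ) (T : Finset α) (P : Finset α → Prop) : ℝ :=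
  expect p T fun E => if P E then 1 else 0

variable {p : ℝ} {T : Finset α} {g h : Finset α → ℝ}

lemma weight_nonneg (hp0 : 0 ≤ p) (hp1 : p ≤ 1) (E : Finset α) : 0 ≤ weight p T E :=
  mul_nonneg (pow_nonneg hp0 _) (pow_nonneg (sub_nonneg.2 hp1) _)

lemma sum_weight (p : ℝ) (T : Finset α) : ∑ E ∈ T.powerset, weight p T E = 1 := by
  simp only [weight, sum_pow_mul_eq_add_pow, add_sub_cancel, one_pow]

lemma expect_congr (hgh : ∀ E ⊆ T, g E = h E) : expect p T g = expect p T h :=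
  sum_congr rfl fun E hE => by rw [hgh E (mem_powerset.1 hE)]

lemma expect_mono (hp0 : 0 ≤ p) (hp1 : p ≤ 1) (hgh : ∀ E ⊆ T, g E ≤ h E) :
    expect p T g ≤ expect p T h :=
  sum_le_sum fun E hE =>
    mul_le_mul_of_nonneg_left (hgh E (mem_powerset.1 hE)) (weight_nonneg hp0 hp1 E)

lemma expect_nonneg (hp0 : 0 ≤ p) (hp1 : p ≤ 1) (hg : ∀ E ⊆ T, 0 ≤ g E) :
    0 ≤ expect p T g :=
  sum_nonneg fun E hE => mul_nonneg (weight_nonneg hp0 hp1 E) (hg E (mem_powerset.1 hE))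

lemma expect_const (c : ℝ) : expect p T (fun _ => c) = c := by
  rw [expect, ← sum_mul, sum_weight, one_mul]

lemma expect_const_mul (c : ℝ) : expect p T (fun E => c * g E) = c * expect p T g := by
  simp only [expect, mul_sum, mul_left_comm]

lemma expect_sub : expect p T (fun E => g E - h E) = expect p T g - expect p T h := by
  simp only [expect, mul_sub, sum_sub_distrib]

lemma expect_sum {ι : Type*} (s : Finset ι) (g : ι → Finset α → ℝ) :
    expect p T (fun E => ∑ i ∈ s, g i E) = ∑ i ∈ s, expect p T (g i) := by
  simp only [expect, mul_sum]
  exact sum_comm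

lemma hasDerivAt_expect {g g' : Finset α → ℝ → ℝ} {x : ℝ}
    (hg : ∀ E, HasDerivAt (g E) (g' E x) x) :
    HasDerivAt (fun y => expect p T fun E => g E y) (expect p T fun E => g' E x) x :=
  HasDerivAt.fun_sum fun E _ => (hg E).const_mul _

lemma prob_le_expect {P : Finset α → Prop} (hp0 : 0 ≤ p) (hp1 : p ≤ 1) (hg : ∀ E ⊆ T, 0 ≤ g E)
    (hPg : ∀ E ⊆ T, P E → 1 ≤ g E) : prob p T P ≤ expect p T g := by
  refine expect_mono hp0 hp1 fun E hE => ?_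
  split_ifs with hP
  · exact hPg E hE hP
  · exact hg E hE

lemma prob_mono {P Q : Finset α → Prop} (hp0 : 0 ≤ p) (hp1 : p ≤ 1) (hPQ : ∀ E, P E → Q E) :
    prob p T P ≤ prob p T Q := by
  refine expect_mono hp0 hp1 fun E _ => ?_
  split_ifs with hP hQ hQ
  · exact le_rfl
  · exact absurd (hPQ E hP) hQ
  · exact zero_le_one
  · exact le_rfl

lemma prob_not (P : Finset α → Prop) : prob p T (fun E => ¬P E) = 1 - prob p T P := by
  classical
  calc prob p T (fun E => ¬P E)
      = expect p T (fun E => 1 - if P E then 1 else 0) := by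
        refine expect_congr fun E _ => ?_
        by_cases hP : P E <;> simp [hP]
    _ = 1 - prob p T P := by rw [expect_sub, expect_const, prob]

lemma prob_exists_le_sum {σ : Type*} (S : Finset σ) (P : σ → Finset α → Prop) (hp0 : 0 ≤ p)
    (hp1 : p ≤ 1) : prob p T (fun E => ∃ x ∈ S, P x E) ≤ ∑ x ∈ S, prob p T (P x) := by
  classical
  simp only [prob]
  rw [← expect_sum]
  refine prob_le_expect hp0 hp1 (fun E _ => sum_nonneg fun x _ => ?_) fun E _ ⟨x, hx, hPx⟩ => ?_
  · split_ifs <;> norm_num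
  · refine le_trans ?_ (single_le_sum (fun y _ => ?_) hx)
    · rw [if_pos hPx]
    · split_ifs <;> norm_num

variable [DecidableEq α]

lemma weight_mul_weight {A B : Finset α} (hA : A ⊆ T) (hB : B ⊆ T) :
    weight p T A * weight p T B = weight p T (A ∪ B) * weight p T (A ∩ B) := by
  have hcard := card_union_add_card_inter A B
  have hAT := card_le_card hA
  have hBT := card_le_card hB
  have hUT := card_le_card (union_subset hA hB)
  have hIA := card_le_card (inter_subset_left (s₁ := A) (s₂ := B))
  simp only [weight, mul_mul_mul_comm, ← pow_add]
  congr 2 <;> omega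

lemma weight_union {U V A B : Finset α} (hA : A ⊆ U) (hB : B ⊆ V) (hUV : Disjoint U V) :
    weight p (U ∪ V) (A ∪ B) = weight p U A * weight p V B := by
  have hAB := disjoint_of_subset_left hA (disjoint_of_subset_right hB hUV)
  have := card_le_card hA
  have := card_le_card hB
  rw [weight, weight, weight, card_union_of_disjoint hUV, card_union_of_disjoint hAB,
    mul_mul_mul_comm, ← pow_add, ← pow_add]
  congr 2
  omega

lemma expect_union {U V : Finset α} (hUV : Disjoint U V) (g : Finset α → ℝ) :
    expect p (U ∪ V) g = expect p U fun A => expect p V fun B => g (A ∪ B) := by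
  simp only [expect, mul_sum, ← sum_product']
  refine sum_nbij' (fun E => (E ∩ U, E ∩ V)) (fun q => q.1 ∪ q.2) ?_ ?_ ?_ ?_ ?_
  · intro E _
    simp [inter_subset_right]
  · intro q hq
    simp only [mem_product, mem_powerset] at hq ⊢
    exact union_subset_union hq.1 hq.2
  · intro E hE
    simp only [mem_powerset] at hE
    rw [← inter_union_distrib_left, inter_eq_left.2 hE]
  · intro q hq
    simp only [mem_product, mem_powerset] at hq
    have h1 : Disjoint q.1 V := disjoint_of_subset_left hq.1 hUV
    have h2 : Disjoint q.2 U := disjoint_of_subset_left hq.2 hUV.symm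
    ext1 <;> dsimp only
    · rw [union_inter_distrib_right, inter_eq_left.2 hq.1, disjoint_iff_inter_eq_empty.1 h2,
        union_empty]
    · rw [union_inter_distrib_right, inter_eq_left.2 hq.2, disjoint_iff_inter_eq_empty.1 h1,
        empty_union]
  · intro E hE
    rw [mem_powerset] at hE
    rw [← inter_union_distrib_left, inter_eq_left.2 hE, ← mul_assoc,
      ← weight_union inter_subset_right inter_subset_right hUV, ← inter_union_distrib_left,
      inter_eq_left.2 hE]

lemma expect_ite_subset {R : Finset α} (hR : R ⊆ T) (g : Finset α → ℝ) :
    expect p T (fun E => if R ⊆ E then g E else 0)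
      = p ^ #R * expect p (T \ R) (fun E => g (E ∪ R)) := by
  conv_lhs => rw [← sdiff_union_of_subset hR, expect_union disjoint_sdiff_self_left]
  rw [← expect_const_mul]
  refine expect_congr fun A hA => ?_
  have hAR : Disjoint A R := disjoint_of_subset_left hA disjoint_sdiff_self_left
  calc expect p R (fun B => if R ⊆ A ∪ B then g (A ∪ B) else 0)
      = expect p R (fun B => if B = R then g (A ∪ R) else 0) := by
        refine expect_congr fun B hB => ?_
        by_cases hBR : B = R
        · simp [hBR]
        · rw [if_neg hBR, if_neg fun hsub => hBR (hB.antisymm ?_)]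
          exact Disjoint.left_le_of_le_sup_left hsub hAR.symm
    _ = p ^ #R * g (A ∪ R) := by simp [expect, weight]

lemma expect_indicator_subset {R : Finset α} (hR : R ⊆ T) :
    expect p T (fun E => if R ⊆ E then 1 else 0) = p ^ #R := by
  rw [expect_ite_subset hR, expect_const, mul_one]

lemma expect_sdiff {R : Finset α} (hR : R ⊆ T) (hg : ∀ E, g (E \ R) = g E) :
    expect p T g = expect p (T \ R) g := by
  conv_lhs => rw [← sdiff_union_of_subset hR, expect_union disjoint_sdiff_self_left]
  refine expect_congr fun A hA => ?_
  have hAR : Disjoint A R := disjoint_of_subset_left hA disjoint_sdiff_self_left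
  calc expect p R (fun B => g (A ∪ B)) = expect p R (fun _ => g A) := by
        refine expect_congr fun B hB => ?_
        rw [← hg, union_sdiff_distrib, sdiff_eq_empty_iff_subset.2 hB, union_empty,
          sdiff_eq_self_of_disjoint hAR]
    _ = g A := expect_const _

lemma harris_inequality (hp0 : 0 ≤ p) (hp1 : p ≤ 1) (hg0 : ∀ E, 0 ≤ g E) (hh0 : ∀ E, 0 ≤ h E)
    (hg : Antitone g) (hh : Antitone h) :
    expect p T g * expect p T h ≤ expect p T (fun E => g E * h E) := by
  have key := T.four_functions_theorem (f₁ := fun E => weight p T E * g E)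
    (f₂ := fun E => weight p T E * h E) (f₃ := fun E => weight p T E * (g E * h E))
    (f₄ := weight p T) (fun E => mul_nonneg (weight_nonneg hp0 hp1 E) (hg0 E))
    (fun E => mul_nonneg (weight_nonneg hp0 hp1 E) (hh0 E))
    (fun E => mul_nonneg (weight_nonneg hp0 hp1 E) (mul_nonneg (hg0 E) (hh0 E)))
    (weight_nonneg hp0 hp1) ?_ subset_rfl subset_rfl
  · simpa only [expect, powerset_infs_powerset_self, powerset_sups_powerset_self, sum_weight,
      mul_one] using key
  intro A hA B hB
  calc weight p T A * g A * (weight p T B * h B)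
      = weight p T (A ∪ B) * weight p T (A ∩ B) * (g A * h B) := by
        rw [← weight_mul_weight hA hB]; ring
    _ ≤ weight p T (A ∪ B) * weight p T (A ∩ B) * (g (A ∩ B) * h (A ∩ B)) :=
        mul_le_mul_of_nonneg_left
          (mul_le_mul (hg inter_subset_left) (hh inter_subset_right) (hh0 _) (hg0 _))
          (mul_nonneg (weight_nonneg hp0 hp1 _) (weight_nonneg hp0 hp1 _))
    _ = weight p T (A ∩ B) * (g (A ∩ B) * h (A ∩ B)) * weight p T (A ∪ B) := by ring

section Janson

variable {ι : Type*} {x : ℝ}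

def numPresent (s : Finset ι) (R : ι → Finset α) (E : Finset α) : ℕ := #{i ∈ s | R i ⊆ E}

def jansonDelta (p : ℝ) (s : Finset ι) (R : ι → Finset α) : ℝ :=
  ∑ i ∈ s, ∑ j ∈ s with ¬Disjoint (R i) (R j), p ^ #(R i ∪ R j)

section numPresent

variable (s : Finset ι) (R : ι → Finset α)

lemma numPresent_mono : Monotone (numPresent s R) := fun _ _ hE =>
  card_le_card (monotone_filter_right _ fun _ _ hi => hi.trans hE)

lemma numPresent_le_of_subset {s' : Finset ι} (hs : s' ⊆ s) (E : Finset α) :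
    numPresent s' R E ≤ numPresent s R E :=
  card_le_card (filter_subset_filter _ hs)

lemma numPresent_filter_add_filter_not (q : ι → Prop) [DecidablePred q] (E : Finset α) :
    numPresent {i ∈ s | q i} R E + numPresent {i ∈ s | ¬q i} R E = numPresent s R E := by
  rw [numPresent, numPresent, numPresent, filter_comm q, filter_comm (fun i => ¬q i)]
  exact card_filter_add_card_filter_not (s := {i ∈ s | R i ⊆ E}) q

lemma numPresent_union (A E : Finset α) :
    numPresent s R (E ∪ A) = numPresent s (fun i => R i \ A) E := by
  simp only [numPresent, sdiff_le_iff', sup_eq_union]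

lemma numPresent_sdiff_of_disjoint {A : Finset α} (hA : ∀ i ∈ s, Disjoint (R i) A)
    (E : Finset α) : numPresent s R (E \ A) = numPresent s R E := by
  unfold numPresent
  congr 1
  exact filter_congr fun i hi => by rw [subset_sdiff, and_iff_left (hA i hi)]

lemma numPresent_union_of_disjoint {A : Finset α} (hA : ∀ i ∈ s, Disjoint (R i) A)
    (E : Finset α) : numPresent s R (E ∪ A) = numPresent s R E := by
  rw [← numPresent_sdiff_of_disjoint s R hA, union_sdiff_right,
    numPresent_sdiff_of_disjoint s R hA]

lemma numPresent_eq_sum (E : Finset α) :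
    (numPresent s R E : ℝ) = ∑ i ∈ s, if R i ⊆ E then 1 else 0 :=
  natCast_card_filter _ _

lemma antitone_exp_neg_numPresent (hx : 0 ≤ x) :
    Antitone fun E => Real.exp (-(x * numPresent s R E)) := fun _ _ hE =>
  Real.exp_le_exp.2 <| neg_le_neg <|
    mul_le_mul_of_nonneg_left (Nat.cast_le.2 (numPresent_mono s R hE)) hx

end numPresent

variable {s : Finset ι} {R : ι → Finset α}

lemma expect_numPresent (hR : ∀ i ∈ s, R i ⊆ T) :
    expect p T (fun E => (numPresent s R E : ℝ)) = ∑ i ∈ s, p ^ #(R i) := by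
  simp only [numPresent_eq_sum, expect_sum]
  exact sum_congr rfl fun i hi => expect_indicator_subset (hR i hi)

lemma one_sub_mul_sum_le_expect_exp (hp0 : 0 ≤ p) (hp1 : p ≤ 1) (hR : ∀ i ∈ s, R i ⊆ T)
    (x : ℝ) :
    1 - x * ∑ i ∈ s, p ^ #(R i) ≤ expect p T (fun E => Real.exp (-(x * numPresent s R E))) := by
  rw [← expect_numPresent hR, ← expect_const_mul, ← expect_const (p := p) (T := T) 1,
    ← expect_sub]
  exact expect_mono hp0 hp1 fun E _ => by linarith [Real.add_one_le_exp (-(x * numPresent s R E))]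

lemma expect_exp_neg_numPresent_le_expect_sdiff (hp0 : 0 ≤ p) (hp1 : p ≤ 1) {A : Finset α}
    (hA : A ⊆ T) {s' : Finset ι} (hs' : s' ⊆ s) (hs'A : ∀ j ∈ s', Disjoint (R j) A) (hx : 0 ≤ x) :
    expect p T (fun E => Real.exp (-(x * numPresent s R E)))
      ≤ expect p (T \ A) (fun E => Real.exp (-(x * numPresent s' R E))) := by
  rw [← expect_sdiff hA fun E => by rw [numPresent_sdiff_of_disjoint s' R hs'A]]
  refine expect_mono hp0 hp1 fun E _ => Real.exp_le_exp.2 <| neg_le_neg <|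
    mul_le_mul_of_nonneg_left ?_ hx
  exact_mod_cast numPresent_le_of_subset s R hs' E

/-- The key step of Janson's inequality, for a single set `R i`: split the count into the sets
meeting `R i` and those disjoint from it; after conditioning on `R i ⊆ E` the latter are
independent of `R i`, and Harris' inequality decouples the two parts. -/
lemma mul_expect_exp_le_expect_ite (hp0 : 0 ≤ p) (hp1 : p ≤ 1) (hR : ∀ j ∈ s, R j ⊆ T)
    {i : ι} (hi : i ∈ s) (hx : 0 ≤ x) :
    (p ^ #(R i) - x * ∑ j ∈ s with ¬Disjoint (R i) (R j), p ^ #(R i ∪ R j))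
        * expect p T (fun E => Real.exp (-(x * numPresent s R E)))
      ≤ expect p T (fun E => if R i ⊆ E then Real.exp (-(x * numPresent s R E)) else 0) := by
  set I := {j ∈ s | Disjoint (R i) (R j)}
  set D := {j ∈ s | ¬Disjoint (R i) (R j)}
  have hI : ∀ j ∈ I, Disjoint (R j) (R i) := fun j hj => (mem_filter.1 hj).2.symm
  have hRi : R i ⊆ T := hR i hi
  have hsplit : ∀ E, numPresent s R E = numPresent D R E + numPresent I R E := fun E => by
    rw [add_comm]
    exact (numPresent_filter_add_filter_not s R _ E).symm
  have hcond : expect p T (fun E => if R i ⊆ E then Real.exp (-(x * numPresent s R E)) else 0)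
      = p ^ #(R i) * expect p (T \ R i) (fun E =>
          Real.exp (-(x * numPresent D R (E ∪ R i))) * Real.exp (-(x * numPresent I R E))) := by
    rw [expect_ite_subset hRi]
    congr 1
    refine expect_congr fun E _ => ?_
    rw [hsplit, numPresent_union_of_disjoint I R hI, ← Real.exp_add, Nat.cast_add]
    ring_nf
  have hharris := harris_inequality (T := T \ R i) hp0 hp1 (fun _ => (Real.exp_pos _).le)
    (fun _ => (Real.exp_pos _).le)
    ((antitone_exp_neg_numPresent D R hx).comp_monotone fun _ _ h =>
      union_subset_union h (subset_refl (R i)))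
    (antitone_exp_neg_numPresent I R hx)
  have hindep := expect_exp_neg_numPresent_le_expect_sdiff hp0 hp1 hRi (filter_subset _ s) hI hx
  have hdep : 1 - x * ∑ j ∈ D, p ^ #(R j \ R i)
      ≤ expect p (T \ R i) (fun E => Real.exp (-(x * numPresent D R (E ∪ R i)))) := by
    simp only [numPresent_union]
    exact one_sub_mul_sum_le_expect_exp hp0 hp1
      (fun j hj => sdiff_subset_sdiff (hR j (mem_filter.1 hj).1) le_rfl) x
  have hpow : p ^ #(R i) * (1 - x * ∑ j ∈ D, p ^ #(R j \ R i))
      = p ^ #(R i) - x * ∑ j ∈ D, p ^ #(R i ∪ R j) := by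
    simp only [mul_sub, mul_one, mul_sum, mul_left_comm _ x, ← pow_add, card_sdiff_add_card,
      union_comm, add_comm (#(R i))]
  have hφ0 : 0 ≤ expect p T (fun E => Real.exp (-(x * numPresent s R E))) :=
    expect_nonneg hp0 hp1 fun _ _ => (Real.exp_pos _).le
  have hdep0 : 0 ≤ expect p (T \ R i) (fun E => Real.exp (-(x * numPresent D R (E ∪ R i)))) :=
    expect_nonneg hp0 hp1 fun _ _ => (Real.exp_pos _).le
  rw [hcond, ← hpow, mul_assoc]
  refine mul_le_mul_of_nonneg_left (le_trans ?_ hharris) (pow_nonneg hp0 _)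
  exact (mul_le_mul_of_nonneg_right hdep hφ0).trans (mul_le_mul_of_nonneg_left hindep hdep0)

lemma sub_mul_expect_exp_le (hp0 : 0 ≤ p) (hp1 : p ≤ 1) (hR : ∀ i ∈ s, R i ⊆ T) (hx : 0 ≤ x) :
    (∑ i ∈ s, p ^ #(R i) - x * jansonDelta p s R)
        * expect p T (fun E => Real.exp (-(x * numPresent s R E)))
      ≤ expect p T (fun E => numPresent s R E * Real.exp (-(x * numPresent s R E))) := by
  have hsum : expect p T (fun E => numPresent s R E * Real.exp (-(x * numPresent s R E)))
      = ∑ i ∈ s, expect p T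
          (fun E => if R i ⊆ E then Real.exp (-(x * numPresent s R E)) else 0) := by
    rw [← expect_sum]
    refine expect_congr fun E _ => ?_
    simp only [numPresent_eq_sum, sum_mul, ite_mul, one_mul, zero_mul]
  rw [hsum, jansonDelta, mul_sum, ← sum_sub_distrib, sum_mul]
  exact sum_le_sum fun i hi => mul_expect_exp_le_expect_ite hp0 hp1 hR hi hx

/-- Writing `φ` for the Laplace transform of the count, `φ' = -𝔼[N e^{-yN}] ≤ -(μ - yΔ̄) φ`, so
`φ(y) e^{yμ - y²Δ̄/2}` is nonincreasing on `[0, ∞)` and equals `1` at `0`. -/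
lemma expect_exp_neg_numPresent_le (hp0 : 0 ≤ p) (hp1 : p ≤ 1) (hR : ∀ i ∈ s, R i ⊆ T)
    (hx : 0 ≤ x) :
    expect p T (fun E => Real.exp (-(x * numPresent s R E)))
      ≤ Real.exp (-(x * ∑ i ∈ s, p ^ #(R i)) + x ^ 2 * jansonDelta p s R / 2) := by
  set μ := ∑ i ∈ s, p ^ #(R i)
  set Δ := jansonDelta p s R
  set N : Finset α → ℝ := fun E => numPresent s R E
  set φ : ℝ → ℝ := fun y => expect p T (fun E => Real.exp (-(y * N E)))
  set ψ : ℝ → ℝ := fun y => φ y * Real.exp (y * μ - y ^ 2 * Δ / 2)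
  have hφ : ∀ y, HasDerivAt φ (-expect p T fun E => N E * Real.exp (-(y * N E))) y := by
    intro y
    rw [neg_eq_neg_one_mul, ← expect_const_mul]
    exact hasDerivAt_expect (g' := fun E y => -1 * (N E * Real.exp (-(y * N E)))) fun E =>
      (((hasDerivAt_id y).mul_const (N E)).neg.exp).congr_deriv (by simp; ring)
  have hψ : ∀ y, HasDerivAt ψ (Real.exp (y * μ - y ^ 2 * Δ / 2)
      * ((μ - y * Δ) * φ y - expect p T fun E => N E * Real.exp (-(y * N E)))) y := fun y =>
    ((hφ y).mul ((((hasDerivAt_id y).mul_const μ).sub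
      (((hasDerivAt_pow 2 y).mul_const Δ).div_const 2)).exp)).congr_deriv (by simp; ring)
  have hanti : AntitoneOn ψ (Set.Ici 0) := by
    refine antitoneOn_of_hasDerivWithinAt_nonpos (convex_Ici 0)
      (fun y _ => (hψ y).continuousAt.continuousWithinAt) (fun y _ => (hψ y).hasDerivWithinAt)
      fun y hy => mul_nonpos_of_nonneg_of_nonpos (Real.exp_pos _).le (sub_nonpos.2 ?_)
    rw [interior_Ici] at hy
    exact sub_mul_expect_exp_le hp0 hp1 hR (le_of_lt hy)
  have hψ0 : ψ 0 = 1 := by simp [ψ, φ, expect_const]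
  have hψx : φ x * Real.exp (x * μ - x ^ 2 * Δ / 2) ≤ 1 :=
    hψ0 ▸ hanti Set.self_mem_Ici (Set.mem_Ici.2 hx) hx
  rw [← le_div_iff₀ (Real.exp_pos _), one_div, ← Real.exp_neg] at hψx
  rwa [neg_sub', sub_neg_eq_add] at hψx

theorem janson_inequality (hp0 : 0 ≤ p) (hp1 : p ≤ 1) (hR : ∀ i ∈ s, R i ⊆ T)
    {t : ℝ} (ht : 0 ≤ t) (hΔ : 0 < jansonDelta p s R) :
    prob p T (fun E => (numPresent s R E : ℝ) ≤ ∑ i ∈ s, p ^ #(R i) - t)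
      ≤ Real.exp (-(t ^ 2 / (2 * jansonDelta p s R))) := by
  set μ := ∑ i ∈ s, p ^ #(R i)
  set Δ := jansonDelta p s R
  set x := t / Δ with hxdef
  have hx : 0 ≤ x := div_nonneg ht hΔ.le
  calc prob p T (fun E => (numPresent s R E : ℝ) ≤ μ - t)
      ≤ expect p T (fun E => Real.exp (x * (μ - t)) * Real.exp (-(x * numPresent s R E))) := by
        refine prob_le_expect hp0 hp1 (fun E _ => by positivity) fun E _ hE => ?_
        rw [← Real.exp_add]
        exact Real.one_le_exp (by nlinarith)
    _ = Real.exp (x * (μ - t)) * expect p T (fun E => Real.exp (-(x * numPresent s R E))) :=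
        expect_const_mul _
    _ ≤ Real.exp (x * (μ - t)) * Real.exp (-(x * μ) + x ^ 2 * Δ / 2) :=
        mul_le_mul_of_nonneg_left (expect_exp_neg_numPresent_le hp0 hp1 hR hx) (by positivity)
    _ = Real.exp (-(t ^ 2 / (2 * Δ))) := by
        rw [← Real.exp_add]
        congr 1
        rw [hxdef]
        field_simp
        ring

lemma jansonDelta_pos (hp : 0 < p) {i : ι} (hi : i ∈ s) (hRi : (R i).Nonempty) :
    0 < jansonDelta p s R := by
  refine sum_pos' (fun j _ => sum_nonneg fun _ _ => pow_nonneg hp.le _) ⟨i, hi, ?_⟩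
  refine sum_pos' (fun _ _ => pow_nonneg hp.le _) ⟨i, mem_filter.2 ⟨hi, ?_⟩, pow_pos hp _⟩
  rwa [not_disjoint_iff_nonempty_inter, inter_self]

end Janson

end RandomSubset

end

lemma card_filter_mapsTo_mul_pow {β γ : Type*} [Fintype β] [DecidableEq β] [Fintype γ]
    [DecidableEq γ] (V : Finset β) (W : Finset γ) :
    #{j : β → γ | ∀ v ∈ V, j v ∈ W} * Fintype.card γ ^ #V
      = #W ^ #V * Fintype.card γ ^ Fintype.card β := by
  have hpi : ({j : β → γ | ∀ v ∈ V, j v ∈ W} : Finset (β → γ))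
      = Fintype.piFinset fun v => if v ∈ V then W else univ := by
    ext j
    simp only [mem_filter, mem_univ, true_and, Fintype.mem_piFinset]
    refine forall_congr' fun v => ?_
    split_ifs with hv <;> simp [hv]
  simp only [hpi, Fintype.card_piFinset, apply_ite, prod_ite, filter_mem_eq_inter, univ_inter,
    prod_const, card_univ, filter_not, ← compl_eq_univ_sdiff, card_compl]
  rw [mul_assoc, ← pow_add, Nat.sub_add_cancel (card_le_univ V)]

lemma pow_sub_le_card_injective_mapsTo {n : ℕ} (b : ℕ) (S : Finset (Fin n)) :
    (#S + 1 - b) ^ b ≤ #{g : Fin b → Fin n | Function.Injective g ∧ ∀ x, g x ∈ S} := by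
  calc (#S + 1 - b) ^ b ≤ Fintype.card (Fin b ↪ S) := by
        rw [Fintype.card_embedding_eq, Fintype.card_coe, Fintype.card_fin]
        exact Nat.pow_sub_le_descFactorial _ _
    _ ≤ _ := by
        rw [← card_univ]
        refine card_le_card_of_injOn (fun e i => (e i : Fin n)) (fun e _ => ?_) fun e _ e' _ h => ?_
        · simp only [coe_filter, mem_univ, true_and]
          exact ⟨fun i j hij => e.injective (Subtype.ext hij), fun i => (e i).2⟩
        · exact DFunLike.ext _ _ fun i => Subtype.ext (congrFun h i)

open RandomSubset

section Copies

variable {b n k : ℕ} {F : Finset (Finset (Fin b))} {p : ℝ}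

def edgeImage (F : Finset (Finset (Fin b))) (g : Fin b → Fin n) : Finset (Finset (Fin n)) :=
  F.image (·.image g)

lemma card_edgeImage {g : Fin b → Fin n} (hg : Function.Injective g) : #(edgeImage F g) = #F :=
  card_image_of_injective _ (image_injective hg)

lemma edgeImage_subset_iff {g : Fin b → Fin n} {E : Finset (Finset (Fin n))} :
    edgeImage F g ⊆ E ↔ ∀ e ∈ F, e.image g ∈ E :=
  image_subset_iff

lemma edgeImage_subset_allEdges (hF : ∀ e ∈ F, #e = k) {g : Fin b → Fin n}
    (hg : Function.Injective g) : edgeImage F g ⊆ allEdges n k :=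
  edgeImage_subset_iff.2 fun e he =>
    mem_powersetCard.2 ⟨subset_univ _, by rw [card_image_of_injective _ hg, hF e he]⟩

lemma countSpan_eq_numPresent (𝓕 : Finset (Fin b → Fin n)) (E : Finset (Finset (Fin n))) :
    countSpan F 𝓕 E = numPresent 𝓕 (edgeImage F) E := by
  simp only [countSpan, numPresent, edgeImage_subset_iff]

lemma rProb_eq_prob (P : Finset (Finset (Fin n)) → Prop) :
    rProb n k p P = prob p (allEdges n k) P := by
  simp only [rProb, prob, RandomSubset.expect, weight, mul_ite, mul_one, mul_zero]

lemma Phi_le {V' : Finset (Fin b)} {E' : Finset (Finset (Fin b))} (hE'F : E' ⊆ F)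
    (hE' : E'.Nonempty) (hE'V : ∀ e ∈ E', e ⊆ V') :
    Phi univ F n p ≤ (n : ℝ) ^ #V' * p ^ #E' := by
  refine csInf_le (Set.Finite.bddBelow ?_) ⟨V', E', subset_univ _, hE'F, hE', hE'V, rfl⟩
  refine (Set.finite_range fun q : Finset (Fin b) × Finset (Finset (Fin b)) =>
    (n : ℝ) ^ #q.1 * p ^ #q.2).subset ?_
  rintro _ ⟨V, E, -, -, -, -, rfl⟩
  exact ⟨(V, E), rfl⟩

def sharedEdges (F : Finset (Finset (Fin b))) (g j : Fin b → Fin n) : Finset (Finset (Fin b)) :=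
  {e ∈ F | e.image j ∈ edgeImage F g}

variable {g j : Fin b → Fin n}

lemma edgeImage_inter_edgeImage :
    edgeImage F g ∩ edgeImage F j = edgeImage (sharedEdges F g j) j := by
  ext x
  simp only [mem_inter, edgeImage, sharedEdges, mem_image, mem_filter]
  constructor
  · rintro ⟨hx, e, he, rfl⟩
    exact ⟨e, ⟨he, hx⟩, rfl⟩
  · rintro ⟨e, ⟨he, hx⟩, rfl⟩
    exact ⟨hx, e, he, rfl⟩

lemma card_union_add_card_sharedEdges (hg : Function.Injective g) (hj : Function.Injective j) :
    #(edgeImage F g ∪ edgeImage F j) + #(sharedEdges F g j) = 2 * #F := by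
  rw [← card_edgeImage (F := sharedEdges F g j) hj, ← edgeImage_inter_edgeImage,
    card_union_add_card_inter, card_edgeImage hg, card_edgeImage hj, two_mul]

lemma sharedEdges_nonempty (h : ¬Disjoint (edgeImage F g) (edgeImage F j)) :
    (sharedEdges F g j).Nonempty := by
  rw [not_disjoint_iff_nonempty_inter, edgeImage_inter_edgeImage, edgeImage] at h
  exact h.of_image

lemma mem_image_of_mem_sup_sharedEdges {v : Fin b} (hv : v ∈ (sharedEdges F g j).sup id) :
    j v ∈ univ.image g := by
  obtain ⟨e, he, hve⟩ := mem_sup.1 hv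
  obtain ⟨e', -, he'⟩ := mem_image.1 (mem_filter.1 he).2
  obtain ⟨w, -, hw⟩ := mem_image.1 (he' ▸ mem_image_of_mem j hve)
  exact mem_image.2 ⟨w, mem_univ w, hw⟩

/-- `Φ ≤ n ^ v(F') p ^ e(F')` for the subgraph `F'` shared by the two copies, and
`#(R g ∪ R j) + e(F') = 2 e(F)`. -/
lemma pow_card_union_mul_Phi_le (hp0 : 0 ≤ p) (hg : Function.Injective g)
    (hj : Function.Injective j) (h : ¬Disjoint (edgeImage F g) (edgeImage F j)) :
    p ^ #(edgeImage F g ∪ edgeImage F j) * Phi univ F n p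
      ≤ (n : ℝ) ^ #((sharedEdges F g j).sup id) * p ^ (2 * #F) := by
  calc p ^ #(edgeImage F g ∪ edgeImage F j) * Phi univ F n p
      ≤ p ^ #(edgeImage F g ∪ edgeImage F j)
          * ((n : ℝ) ^ #((sharedEdges F g j).sup id) * p ^ #(sharedEdges F g j)) :=
        mul_le_mul_of_nonneg_left (Phi_le (filter_subset _ _) (sharedEdges_nonempty h)
          fun _ he => le_sup (f := id) he) (pow_nonneg hp0 _)
    _ = (n : ℝ) ^ #((sharedEdges F g j).sup id) * p ^ (2 * #F) := by
        rw [← card_union_add_card_sharedEdges hg hj, pow_add]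
        ring

/-- The copies `j` in this fiber map the vertices of `E'` into the at most `b` vertices of the
copy `g`. -/
lemma card_filter_sharedEdges_mul_pow_le (𝒢 : Finset (Fin b → Fin n)) (g : Fin b → Fin n)
    (E' : Finset (Finset (Fin b))) :
    #{j ∈ 𝒢 | sharedEdges F g j = E'} * n ^ #(E'.sup id) ≤ (b + 1) ^ b * n ^ b := by
  calc #{j ∈ 𝒢 | sharedEdges F g j = E'} * n ^ #(E'.sup id)
      ≤ #{j : Fin b → Fin n | ∀ v ∈ E'.sup id, j v ∈ univ.image g} * n ^ #(E'.sup id) := by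
        refine Nat.mul_le_mul_right _ (card_le_card fun j hj => ?_)
        obtain ⟨-, rfl⟩ := mem_filter.1 hj
        exact mem_filter.2 ⟨mem_univ _, fun v hv => mem_image_of_mem_sup_sharedEdges hv⟩
    _ = #(univ.image g) ^ #(E'.sup id) * n ^ b := by
        convert card_filter_mapsTo_mul_pow (E'.sup id) (univ.image g) using 2
        · congr 1
          ext
          simp
        all_goals simp only [Fintype.card_fin]
    _ ≤ (b + 1) ^ b * n ^ b := by
        refine Nat.mul_le_mul_right _ ((Nat.pow_le_pow_left ?_ _).trans
          (Nat.pow_le_pow_right b.succ_pos ?_))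
        · exact (card_image_le.trans_eq (card_fin b)).trans b.le_succ
        · exact (card_le_univ _).trans_eq (Fintype.card_fin b)

/-- Group the copies `j` overlapping `g` by the subgraph of `F` they share with `g`. -/
lemma sum_overlapping_mul_Phi_le (hp0 : 0 ≤ p) {𝒢 : Finset (Fin b → Fin n)}
    (h𝒢 : ∀ j ∈ 𝒢, Function.Injective j) (hg : Function.Injective g) :
    (∑ j ∈ 𝒢 with ¬Disjoint (edgeImage F g) (edgeImage F j), p ^ #(edgeImage F g ∪ edgeImage F j))
        * Phi univ F n p
      ≤ 2 ^ #F * (b + 1) ^ b * n ^ b * p ^ (2 * #F) := by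
  set D := {j ∈ 𝒢 | ¬Disjoint (edgeImage F g) (edgeImage F j)}
  rw [← sum_fiberwise_of_maps_to (g := sharedEdges F g) (t := F.powerset)
    fun j _ => mem_powerset.2 (filter_subset _ _), sum_mul]
  calc _ ≤ ∑ _E' ∈ F.powerset, ((b + 1) ^ b * n ^ b * p ^ (2 * #F) : ℝ) := sum_le_sum ?_
    _ = 2 ^ #F * (b + 1) ^ b * n ^ b * p ^ (2 * #F) := by
        rw [sum_const, card_powerset, nsmul_eq_mul]
        push_cast
        ring
  intro E' _
  calc (∑ j ∈ D with sharedEdges F g j = E', p ^ #(edgeImage F g ∪ edgeImage F j))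
        * Phi univ F n p
      ≤ ∑ j ∈ D with sharedEdges F g j = E', (n : ℝ) ^ #(E'.sup id) * p ^ (2 * #F) := by
        rw [sum_mul]
        refine sum_le_sum fun j hj => ?_
        obtain ⟨hjD, rfl⟩ := mem_filter.1 hj
        obtain ⟨hj𝒢, hdep⟩ := mem_filter.1 hjD
        exact pow_card_union_mul_Phi_le hp0 hg (h𝒢 j hj𝒢) hdep
    _ = ((#{j ∈ D | sharedEdges F g j = E'} * n ^ #(E'.sup id) : ℕ) : ℝ) * p ^ (2 * #F) := by
        rw [sum_const, nsmul_eq_mul]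
        push_cast
        ring
    _ ≤ (((b + 1) ^ b * n ^ b : ℕ) : ℝ) * p ^ (2 * #F) :=
        mul_le_mul_of_nonneg_right
          (by exact_mod_cast card_filter_sharedEdges_mul_pow_le D g E') (pow_nonneg hp0 _)
    _ = (b + 1) ^ b * n ^ b * p ^ (2 * #F) := by push_cast; ring

lemma jansonDelta_edgeImage_mul_Phi_le (hp0 : 0 ≤ p) {𝒢 : Finset (Fin b → Fin n)}
    (h𝒢 : ∀ j ∈ 𝒢, Function.Injective j) :
    jansonDelta p 𝒢 (edgeImage F) * Phi univ F n p
      ≤ #𝒢 * (2 ^ #F * (b + 1) ^ b * n ^ b * p ^ (2 * #F)) := by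
  rw [jansonDelta, sum_mul, ← nsmul_eq_mul, ← sum_const]
  exact sum_le_sum fun g hg => sum_overlapping_mul_Phi_le hp0 h𝒢 (h𝒢 g hg)

lemma pos_of_Phi_pos (hp0 : 0 ≤ p) (hF : F.Nonempty) (hΦ : 0 < Phi univ F n p) : 0 < p := by
  refine hp0.lt_of_ne fun hp => ?_
  subst hp
  have := Phi_le (n := n) (p := 0) subset_rfl hF fun e _ => subset_univ e
  rw [zero_pow (card_ne_zero.2 hF), mul_zero] at this
  linarith

theorem prob_numPresent_edgeImage_le (hF : ∀ e ∈ F, #e = k) (hFne : F.Nonempty) (hp0 : 0 ≤ p)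
    (hp1 : p ≤ 1) {𝒢 : Finset (Fin b → Fin n)} (h𝒢 : ∀ g ∈ 𝒢, Function.Injective g)
    (h𝒢ne : 𝒢.Nonempty) (hΦ : 0 < Phi univ F n p) (hn : 0 < n) {θ : ℝ} (hθ : 0 ≤ θ) :
    prob p (allEdges n k)
        (fun E => (numPresent 𝒢 (edgeImage F) E : ℝ) ≤ (1 - θ) * (#𝒢 * p ^ #F))
      ≤ Real.exp (-(θ ^ 2 * #𝒢 * Phi univ F n p / (2 * (2 ^ #F * (b + 1) ^ b * n ^ b)))) := by
  have hp := pos_of_Phi_pos hp0 hFne hΦ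
  set μ : ℝ := #𝒢 * p ^ #F
  have hμ : ∑ g ∈ 𝒢, p ^ #(edgeImage F g) = μ := by
    rw [sum_congr rfl fun g hg => by rw [card_edgeImage (h𝒢 g hg)], sum_const, nsmul_eq_mul]
  obtain ⟨g, hg⟩ := h𝒢ne
  obtain ⟨e, he⟩ := hFne
  have hΔ : 0 < jansonDelta p 𝒢 (edgeImage F) :=
    jansonDelta_pos hp hg ⟨e.image g, mem_image_of_mem _ he⟩
  have hJ := janson_inequality hp0 hp1
    (fun g hg => edgeImage_subset_allEdges hF (h𝒢 g hg)) (t := θ * μ) (by positivity) hΔ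
  rw [hμ, ← one_sub_mul] at hJ
  refine hJ.trans (Real.exp_le_exp.2 (neg_le_neg ?_))
  rw [div_le_div_iff₀ (by positivity) (by positivity)]
  calc θ ^ 2 * #𝒢 * Phi univ F n p * (2 * jansonDelta p 𝒢 (edgeImage F))
      = 2 * θ ^ 2 * #𝒢 * (jansonDelta p 𝒢 (edgeImage F) * Phi univ F n p) := by ring
    _ ≤ 2 * θ ^ 2 * #𝒢 * (#𝒢 * (2 ^ #F * (b + 1) ^ b * n ^ b * p ^ (2 * #F))) :=
        mul_le_mul_of_nonneg_left (jansonDelta_edgeImage_mul_Phi_le hp0 h𝒢) (by positivity)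
    _ = (θ * μ) ^ 2 * (2 * (2 ^ #F * (b + 1) ^ b * n ^ b)) := by ring

lemma prob_not_containsCopy_le (hF : ∀ e ∈ F, #e = k) (hFne : F.Nonempty) (hp0 : 0 ≤ p)
    (hp1 : p ≤ 1) {lam c : ℝ} (hlam : 0 < lam) (hn : 0 < n) (hbn : 2 * b ≤ lam * n)
    (hc : 4 * (2 ^ #F * (b + 1) ^ b) * (2 / lam) ^ b ≤ c) (hΦ : c * n ≤ Phi univ F n p)
    {S : Finset (Fin n)} (hS : (#S : ℝ) = lam * n) :
    prob p (allEdges n k) (fun E => ¬ContainsCopy F E S) ≤ Real.exp (-(2 * n)) := by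
  set C : ℝ := 2 ^ #F * (b + 1) ^ b
  set 𝒢 : Finset (Fin b → Fin n) := {g | Function.Injective g ∧ ∀ x, g x ∈ S}
  have h𝒢 : ∀ g ∈ 𝒢, Function.Injective g := fun g hg => (mem_filter.1 hg).2.1
  have h𝒢card : (lam / 2) ^ b * n ^ b ≤ #𝒢 := by
    have hbS : b ≤ #S + 1 := by
      have : (b : ℝ) ≤ #S := by rw [hS]; linarith [(b.cast_nonneg : (0 : ℝ) ≤ b)]
      have : b ≤ #S := by exact_mod_cast this
      omega
    calc (lam / 2) ^ b * n ^ b = (lam * n / 2) ^ b := by ring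
      _ ≤ ((#S + 1 - b : ℕ) : ℝ) ^ b := by
          refine pow_le_pow_left₀ (by positivity) ?_ b
          rw [Nat.cast_sub hbS]
          push_cast
          linarith
      _ ≤ #𝒢 := by exact_mod_cast pow_sub_le_card_injective_mapsTo b S
  have hc0 : 0 < c := lt_of_lt_of_le (by positivity) hc
  have hΦ0 : 0 < Phi univ F n p := lt_of_lt_of_le (by positivity) hΦ
  have h𝒢ne : 𝒢.Nonempty :=
    card_pos.1 (by exact_mod_cast (by positivity : (0 : ℝ) < _).trans_le h𝒢card)
  calc prob p (allEdges n k) (fun E => ¬ContainsCopy F E S)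
      ≤ prob p (allEdges n k)
          (fun E => (numPresent 𝒢 (edgeImage F) E : ℝ) ≤ (1 - 1) * (#𝒢 * p ^ #F)) := by
        refine prob_mono hp0 hp1 fun E hE => ?_
        have : numPresent 𝒢 (edgeImage F) E = 0 := card_eq_zero.2 <| filter_eq_empty_iff.2
          fun g hg hsub => hE ⟨g, ⟨h𝒢 g hg, edgeImage_subset_iff.1 hsub⟩, (mem_filter.1 hg).2.2⟩
        simp [this]
    _ ≤ Real.exp (-(1 ^ 2 * #𝒢 * Phi univ F n p / (2 * (C * n ^ b)))) :=
        prob_numPresent_edgeImage_le hF hFne hp0 hp1 h𝒢 h𝒢ne hΦ0 hn zero_le_one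
    _ ≤ Real.exp (-(2 * n)) := by
        refine Real.exp_le_exp.2 (neg_le_neg ((le_div_iff₀ (by positivity)).2 ?_))
        calc 2 * n * (2 * (C * n ^ b))
            = 4 * C * (2 / lam) ^ b * n * ((lam / 2) ^ b * n ^ b) := by
              rw [div_pow, div_pow]
              field_simp
              ring
          _ ≤ c * n * #𝒢 := by gcongr
          _ ≤ 1 ^ 2 * #𝒢 * Phi univ F n p := by nlinarith

theorem le_prob_forall_containsCopy (hF : ∀ e ∈ F, #e = k) (hFne : F.Nonempty) (hp0 : 0 ≤ p)
    (hp1 : p ≤ 1) {lam c : ℝ} (hlam : 0 < lam) (hn : 0 < n) (hbn : 2 * b ≤ lam * n)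
    (hc : 4 * (2 ^ #F * (b + 1) ^ b) * (2 / lam) ^ b ≤ c) (hΦ : c * n ≤ Phi univ F n p) :
    1 - Real.exp (-n) ≤ rProb n k p fun E =>
      ∀ S : Finset (Fin n), (#S : ℝ) = lam * n → ContainsCopy F E S := by
  set 𝒮 : Finset (Finset (Fin n)) := {S | (#S : ℝ) = lam * n}
  have hbad : prob p (allEdges n k)
      (fun E => ¬∀ S : Finset (Fin n), (#S : ℝ) = lam * n → ContainsCopy F E S)
        ≤ Real.exp (-n) := by
    calc _ ≤ prob p (allEdges n k) (fun E => ∃ S ∈ 𝒮, ¬ContainsCopy F E S) := by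
          refine prob_mono hp0 hp1 fun E hE => ?_
          simp only [not_forall, exists_prop] at hE
          obtain ⟨S, hS, hcopy⟩ := hE
          exact ⟨S, mem_filter.2 ⟨mem_univ _, hS⟩, hcopy⟩
      _ ≤ ∑ S ∈ 𝒮, prob p (allEdges n k) (fun E => ¬ContainsCopy F E S) :=
          prob_exists_le_sum 𝒮 _ hp0 hp1
      _ ≤ ∑ _S ∈ 𝒮, Real.exp (-(2 * n)) := sum_le_sum fun S hS =>
          prob_not_containsCopy_le hF hFne hp0 hp1 hlam hn hbn hc hΦ (mem_filter.1 hS).2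
      _ ≤ 2 ^ n * Real.exp (-(2 * n)) := by
          rw [sum_const, nsmul_eq_mul]
          gcongr
          exact_mod_cast (card_filter_le _ _).trans_eq (by simp)
      _ ≤ Real.exp n * Real.exp (-(2 * n)) := by
          gcongr
          calc (2 : ℝ) ^ n ≤ Real.exp 1 ^ n :=
                pow_le_pow_left₀ zero_le_two (by linarith [Real.add_one_le_exp 1]) n
            _ = Real.exp n := by rw [← Real.exp_nat_mul, mul_one]
      _ = Real.exp (-n) := by rw [← Real.exp_add]; ring_nf
  rw [rProb_eq_prob]
  linarith [prob_not (p := p) (T := allEdges n k)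
    fun E => ∀ S : Finset (Fin n), (#S : ℝ) = lam * n → ContainsCopy F E S]

theorem le_prob_countSpan (hF : ∀ e ∈ F, #e = k) (hFne : F.Nonempty) (hp0 : 0 ≤ p)
    (hp1 : p ≤ 1) {lam c : ℝ} (hlam : 0 < lam) (hn : 0 < n)
    (hc : 8 * (2 ^ #F * (b + 1) ^ b) / lam ≤ c) (hΦ : c * n ≤ Phi univ F n p)
    {𝓕 : Finset (Fin b → Fin n)} (h𝓕 : ∀ A ∈ 𝓕, Function.Injective A)
    (h𝓕card : (#𝓕 : ℝ) = lam * n ^ b) :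
    1 - Real.exp (-n) ≤ rProb n k p fun E => lam / 2 * n ^ b * p ^ #F ≤ countSpan F 𝓕 E := by
  set C : ℝ := 2 ^ #F * (b + 1) ^ b
  have hc0 : 0 < c := lt_of_lt_of_le (by positivity) hc
  have hΦ0 : 0 < Phi univ F n p := lt_of_lt_of_le (by positivity) hΦ
  have h𝓕ne : 𝓕.Nonempty :=
    card_pos.1 (by exact_mod_cast h𝓕card ▸ (by positivity : 0 < lam * n ^ b))
  have hbad : prob p (allEdges n k) (fun E => ¬lam / 2 * n ^ b * p ^ #F ≤ countSpan F 𝓕 E)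
      ≤ Real.exp (-n) := by
    calc _ ≤ prob p (allEdges n k)
          (fun E => (numPresent 𝓕 (edgeImage F) E : ℝ) ≤ (1 - 1 / 2) * (#𝓕 * p ^ #F)) := by
          refine prob_mono hp0 hp1 fun E hE => ?_
          rw [← countSpan_eq_numPresent, h𝓕card]
          linarith
      _ ≤ Real.exp (-((1 / 2) ^ 2 * #𝓕 * Phi univ F n p / (2 * (C * n ^ b)))) :=
          prob_numPresent_edgeImage_le hF hFne hp0 hp1 h𝓕 h𝓕ne hΦ0 hn (by norm_num)
      _ ≤ Real.exp (-n) := by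
          refine Real.exp_le_exp.2 (neg_le_neg ((le_div_iff₀ (by positivity)).2 ?_))
          calc n * (2 * (C * n ^ b)) = (1 / 2) ^ 2 * (lam * n ^ b) * (8 * C / lam * n) := by
                field_simp
                ring
            _ ≤ (1 / 2) ^ 2 * #𝓕 * Phi univ F n p := by
                rw [h𝓕card]
                gcongr
                exact (mul_le_mul_of_nonneg_right hc (by positivity)).trans hΦ
  rw [rProb_eq_prob]
  linarith [prob_not (p := p) (T := allEdges n k)
    fun E => lam / 2 * n ^ b * p ^ #F ≤ (countSpan F 𝓕 E : ℝ)]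

end Copies

theorem random_graph_copies_general
    (k : ℕ) (b f : ℕ) (F : Finset (Finset (Fin b)))
    (hFcard : ∀ e ∈ F, e.card = k) (hFf : F.card = f) (hf : 0 < f)
    (lam : ℝ) (hlam : 0 < lam) :
    ∃ c : ℝ, 0 < c ∧ ∃ n₀ : ℕ, ∀ n : ℕ, n₀ ≤ n → ∀ p : ℝ, 0 ≤ p → p ≤ 1 →
      c * n ≤ Phi (Finset.univ : Finset (Fin b)) F n p →
      (1 - Real.exp (-(n : ℝ)) ≤ rProb n k p fun E =>
        ∀ S : Finset (Fin n), (S.card : ℝ) = lam * n → ContainsCopy F E S) ∧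
      ∀ 𝓕 : Finset (Fin b → Fin n), (∀ A ∈ 𝓕, Function.Injective A) →
        (𝓕.card : ℝ) = lam * (n : ℝ) ^ b →
        1 - Real.exp (-(n : ℝ)) ≤ rProb n k p fun E =>
          lam / 2 * (n : ℝ) ^ b * p ^ f ≤ (countSpan F 𝓕 E : ℝ) := by
  subst hFf
  have hFne : F.Nonempty := card_pos.1 hf
  set C : ℝ := 2 ^ #F * (b + 1) ^ b
  refine ⟨4 * C * (2 / lam) ^ b + 8 * C / lam, by positivity, ⌈2 * b / lam⌉₊ + 1,
    fun n hn p hp0 hp1 hΦ => ?_⟩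
  have hn0 : 0 < n := by omega
  have hbn : 2 * (b : ℝ) ≤ lam * n := (div_le_iff₀' hlam).1 <|
    (Nat.le_ceil _).trans (by exact_mod_cast (by omega : ⌈2 * (b : ℝ) / lam⌉₊ ≤ n))
  exact ⟨le_prob_forall_containsCopy hFcard hFne hp0 hp1 hlam hn0 hbn
      (le_add_of_nonneg_right (by positivity)) hΦ,
    fun 𝓕 h𝓕 h𝓕card => le_prob_countSpan hFcard hFne hp0 hp1 hlam hn0
      (le_add_of_nonneg_left (by positivity)) hΦ h𝓕 h𝓕card⟩

/-- part of Lemma 2.2 of BHKM. Let `F` be a labelled `k`-graph with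
`b` vertices and `f > 0` edges and let `λ > 0`. There exist `c > 0` and `n₀` such that
for all `n ≥ n₀`: if `Φ_F(n,p) ≥ c n`, then for `H = H^{(k)}(n,p)`: (i) with probability
at least `1 - exp(-n)` every induced subgraph of `H` on `λ n` vertices contains a copy
of `F`; (ii) for every family `ℱ` of `λ n^b` ordered `b`-subsets of `V`, with
probability at least `1 - exp(-n)` at least `(λ/2) n^b p^f` of the ordered `b`-sets in
`ℱ` span labelled copies of `F` in `H`. -/
theorem random_graph_copies
    (k : ℕ) (hk : 2 ≤ k) (b f : ℕ) (F : Finset (Finset (Fin b)))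
    (hFcard : ∀ e ∈ F, e.card = k) (hFf : F.card = f) (hf : 0 < f)
    (lam : ℝ) (hlam : 0 < lam) :
    ∃ c : ℝ, 0 < c ∧ ∃ n₀ : ℕ, ∀ n : ℕ, n₀ ≤ n → ∀ p : ℝ, 0 ≤ p → p ≤ 1 →
      c * n ≤ Phi (Finset.univ : Finset (Fin b)) F n p →
      (1 - Real.exp (-(n : ℝ)) ≤ rProb n k p fun E =>
        ∀ S : Finset (Fin n), (S.card : ℝ) = lam * n → ContainsCopy F E S) ∧
      ∀ 𝓕 : Finset (Fin b → Fin n), (∀ A ∈ 𝓕, Function.Injective A) →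
        (𝓕.card : ℝ) = lam * (n : ℝ) ^ b →
        1 - Real.exp (-(n : ℝ)) ≤ rProb n k p fun E =>
          lam / 2 * (n : ℝ) ^ b * p ^ f ≤ (countSpan F 𝓕 E : ℝ) :=
  random_graph_copies_general k b f F hFcard hFf hf lam hlam
end

section
/- For every 0 < β ≤ 1 there exists m₀ such that the following holds for every m ≥ m₀. There exists a bipartite graph B with vertex classes X_m ∪ Y_m and Z_m and maximum degree Δ(B) ≤ 100, such that |X_m| = m + ⌊βm⌋, |Y_m| = 2m and |Z_m| = 3m, and for every subset X'_m ⊆ X_m with |X'_m| = m, the induced bipartite graph B[X'_m ∪ Y_m, Z_m] contains a perfect matching. -/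
open Finset Filter Topology

/-! `B` is the union of two bounded-degree bipartite graphs: `θ` between `X ∪ Y` and `Z`, in
which every set of at most `2m` vertices of `X ∪ Y` has at least as many neighbours, and `φ`
between `Z` and `Y`, in which every set of at most `m` vertices of `Z` has at least as many
neighbours. Each is the union of 25 injections into two copies of the target side, which bounds
the degrees on both sides; a union bound over the pairs `(S, W)` with `|W| = |S| - 1` shows that
some choice of the injections expands.
Given `X'`, Hall's condition for matching `Z` into `X' ∪ Y` holds: a set `A ⊆ Z` with
`|A| ≤ m` has enough `φ`-neighbours in `Y`, and if a larger `A` had fewer than `|A|` neighbours,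
its at most `2m` non-neighbours in `X' ∪ Y` would have all their `θ`-neighbours in `Z \ A`,
which is too small. -/

namespace TemplateGraph

theorem pow_le_three_pow_mul_factorial (s : ℕ) : s ^ s ≤ 3 ^ s * s.factorial := by
  have h : ((s : ℝ) ^ s) / s.factorial ≤ 3 ^ s :=
    calc ((s : ℝ) ^ s) / s.factorial ≤ Real.exp s :=
          Real.pow_div_factorial_le_exp _ s.cast_nonneg s
      _ = Real.exp 1 ^ s := by rw [← Real.exp_nat_mul, mul_one]
      _ ≤ 3 ^ s := by gcongr; exact (Real.exp_one_lt_d9.trans (by norm_num)).le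
  rw [div_le_iff₀ (by positivity)] at h
  exact_mod_cast h

theorem pow_mul_choose_le (a s : ℕ) : s ^ s * a.choose s ≤ 3 ^ s * a ^ s :=
  calc s ^ s * a.choose s ≤ 3 ^ s * s.factorial * a.choose s := by
        gcongr; exact pow_le_three_pow_mul_factorial s
    _ = 3 ^ s * a.descFactorial s := by rw [Nat.descFactorial_eq_factorial_mul_choose, mul_assoc]
    _ ≤ 3 ^ s * a ^ s := by gcongr; exact Nat.descFactorial_le_pow a s

theorem descFactorial_mul_mul_pow_le {σ b : ℕ} (k s : ℕ) (h : σ ≤ b) :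
    (σ * k).descFactorial s * b ^ s ≤ σ ^ s * (b * k).descFactorial s := by
  simp only [Nat.descFactorial_eq_prod_range, pow_eq_prod_const, ← prod_mul_distrib]
  refine prod_le_prod' fun i _ => ?_
  rw [Nat.sub_mul, Nat.mul_sub]
  have : σ * i ≤ i * b := by rw [Nat.mul_comm]; exact Nat.mul_le_mul_left i h
  have : σ * k * b = σ * (b * k) := by ring
  omega

/-- In the union bound, `a.choose s * b.choose (s - 1)` counts the pairs `(S, W)` with
`|S| = s` and `|W| = s - 1`, and `((s - 1) / b) ^ ((d + 2) * s)` bounds the probability that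
all `d + 2` random embeddings send `S` into `W × κ`. -/
theorem choose_mul_choose_mul_pow_le {a b c d s : ℕ} (H : 36 * a * c ^ d ≤ b ^ (d + 1))
    (hs : 1 ≤ s) (hsc : s ≤ c) (hcb : c ≤ b) :
    a.choose s * b.choose (s - 1) * (s - 1) ^ ((d + 2) * s) * 4 ^ s ≤ b ^ ((d + 2) * s) := by
  obtain ⟨σ, rfl⟩ : ∃ σ, s = σ + 1 := ⟨s - 1, by omega⟩
  rw [Nat.add_sub_cancel]
  have ha : σ ^ (σ + 1) * a.choose (σ + 1) ≤ 3 ^ (σ + 1) * a ^ (σ + 1) :=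
    (Nat.mul_le_mul_right _ (Nat.pow_le_pow_left σ.le_succ _)).trans (pow_mul_choose_le a _)
  have hb : σ ^ σ * b.choose σ ≤ 3 ^ (σ + 1) * b ^ σ :=
    (pow_mul_choose_le b σ).trans
      (Nat.mul_le_mul_right _ (Nat.pow_le_pow_right (by norm_num) σ.le_succ))
  have hexp : (d + 2) * (σ + 1) = (σ + 1) + σ + 1 + d * (σ + 1) := by ring
  calc a.choose (σ + 1) * b.choose σ * σ ^ ((d + 2) * (σ + 1)) * 4 ^ (σ + 1)
      = (σ ^ (σ + 1) * a.choose (σ + 1)) * (σ ^ σ * b.choose σ) * σ * (σ ^ d) ^ (σ + 1)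
          * 4 ^ (σ + 1) := by
        rw [hexp, pow_add, pow_add, pow_add, pow_mul, pow_one]; ring
    _ ≤ (3 ^ (σ + 1) * a ^ (σ + 1)) * (3 ^ (σ + 1) * b ^ σ) * b * (c ^ d) ^ (σ + 1)
          * 4 ^ (σ + 1) := by
        gcongr ?_ * ?_ * ?_ * (?_ ^ d) ^ _ * _ <;> omega
    _ = 3 ^ (σ + 1) * 3 ^ (σ + 1) * 4 ^ (σ + 1) * (a * c ^ d) ^ (σ + 1) * b ^ (σ + 1) := by
        ring
    _ = (36 * a * c ^ d) ^ (σ + 1) * b ^ (σ + 1) := by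
        rw [← mul_pow, ← mul_pow, ← mul_pow, mul_assoc 36]; rfl
    _ ≤ (b ^ (d + 1)) ^ (σ + 1) * b ^ (σ + 1) := by gcongr
    _ = b ^ ((d + 2) * (σ + 1)) := by ring

theorem sum_lt_of_mul_four_pow_le {c : ℕ → ℕ} {N n : ℕ} (hN : 0 < N)
    (hc : ∀ s ∈ Icc 1 n, c s * 4 ^ s ≤ N) : ∑ s ∈ Icc 1 n, c s < N := by
  have hgeom : ∑ s ∈ Icc 1 n, ((1 : ℝ) / 4) ^ s ≤ 1 / 3 := by
    rw [← Ico_add_one_right_eq_Icc]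
    exact (geom_sum_Ico_le_of_lt_one (by norm_num) (by norm_num)).trans_eq (by norm_num)
  have hNR : (0 : ℝ) < N := by exact_mod_cast hN
  have : (∑ s ∈ Icc 1 n, c s : ℝ) < N :=
    calc (∑ s ∈ Icc 1 n, c s : ℝ) ≤ ∑ s ∈ Icc 1 n, (N : ℝ) * (1 / 4) ^ s := by
          refine sum_le_sum fun s hs => ?_
          rw [one_div_pow, mul_one_div, le_div_iff₀ (by positivity)]
          exact_mod_cast hc s hs
      _ ≤ N * (1 / 3) := by rw [← mul_sum]; gcongr
      _ < N := by linarith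
  exact_mod_cast this

section Neighbors

variable {α β κ ι : Type*} [Fintype ι] [DecidableEq β]

def embNeighbors (f : ι → (α ↪ β × κ)) (S : Finset α) : Finset β :=
  (univ ×ˢ S).image fun p => (f p.1 p.2).1

theorem mem_embNeighbors {f : ι → (α ↪ β × κ)} {S : Finset α} {y : β} :
    y ∈ embNeighbors f S ↔ ∃ i, ∃ x ∈ S, (f i x).1 = y := by
  simp [embNeighbors]

def embGraph [Fintype α] [DecidableEq α] (f : ι → (α ↪ β × κ)) : Finset (α × β) :=
  univ.image fun p : ι × α => (p.2, (f p.1 p.2).1)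

theorem mem_embGraph [Fintype α] [DecidableEq α] {f : ι → (α ↪ β × κ)} {e : α × β} :
    e ∈ embGraph f ↔ ∃ i, (f i e.1).1 = e.2 := by
  obtain ⟨x, y⟩ := e
  simp [embGraph]

theorem card_filter_embGraph_fst_le [Fintype α] [DecidableEq α] (f : ι → (α ↪ β × κ)) (x : α) :
    #{e ∈ embGraph f | e.1 = x} ≤ Fintype.card ι := by
  calc #{e ∈ embGraph f | e.1 = x} ≤ #(univ.image fun i => (x, (f i x).1)) := by
        refine card_le_card fun e he => ?_
        rw [mem_filter] at he
        obtain ⟨he, rfl⟩ := he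
        obtain ⟨i, hi⟩ := mem_embGraph.1 he
        exact mem_image.2 ⟨i, mem_univ _, by rw [hi]⟩
    _ ≤ Fintype.card ι := card_image_le.trans_eq (Finset.card_univ)

theorem card_filter_embGraph_snd_le [Fintype α] [DecidableEq α] [Fintype κ]
    (f : ι → (α ↪ β × κ)) (y : β) :
    #{e ∈ embGraph f | e.2 = y} ≤ Fintype.card ι * Fintype.card κ := by
  calc #{e ∈ embGraph f | e.2 = y}
      ≤ #(({p : ι × α | (f p.1 p.2).1 = y} : Finset (ι × α)).image fun p => (p.2, y)) := by
        refine card_le_card fun e he => ?_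
        rw [mem_filter] at he
        obtain ⟨he, rfl⟩ := he
        obtain ⟨i, hi⟩ := mem_embGraph.1 he
        exact mem_image.2 ⟨(i, e.1), mem_filter.2 ⟨mem_univ _, hi⟩, rfl⟩
    _ ≤ #({p : ι × α | (f p.1 p.2).1 = y} : Finset (ι × α)) := card_image_le
    _ ≤ #(univ : Finset (ι × κ)) := by
        refine card_le_card_of_injOn (fun p => (p.1, (f p.1 p.2).2)) (fun _ _ => mem_univ _) ?_
        rintro ⟨i, x⟩ hx ⟨j, x'⟩ hx' h
        simp only [coe_filter, mem_univ, true_and, Set.mem_ofPred_eq, Prod.mk.injEq] at hx hx' h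
        obtain ⟨rfl, h⟩ := h
        rw [(f i).injective (Prod.ext (hx.trans hx'.symm) h)]
    _ = Fintype.card ι * Fintype.card κ := by rw [Finset.card_univ, Fintype.card_prod]

end Neighbors

section Embeddings

variable {α β γ κ : Type*} [Fintype α] [Fintype β] [Fintype γ] [Fintype κ]
  [DecidableEq α] [DecidableEq β] [DecidableEq γ] [DecidableEq κ]

theorem card_embedding_mapsTo (S : Finset α) (C : Finset γ) :
    #{g : α ↪ γ | ∀ x ∈ S, g x ∈ C} =
      C.card.descFactorial S.card *
        (Fintype.card γ - S.card).descFactorial (Fintype.card α - S.card) := by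
  let e : (α ↪ γ) ≃ Σ f : S ↪ γ, ↥(S : Set α)ᶜ ↪ ↥(Set.range f)ᶜ :=
    (Equiv.embeddingCongr (Equiv.Set.sumCompl (S : Set α)) (Equiv.refl γ)).symm.trans
      Equiv.sumEmbeddingEquivSigmaEmbeddingRestricted
  have he : ∀ g x, (e g).1 x = g x := fun _ _ => rfl
  have hfiber : ∀ f : S ↪ γ, Fintype.card (↥(S : Set α)ᶜ ↪ ↥(Set.range f)ᶜ) =
      (Fintype.card γ - S.card).descFactorial (Fintype.card α - S.card) := by
    intro f
    rw [Fintype.card_embedding_eq, Fintype.card_compl_set, Fintype.card_compl_set,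
      Set.card_range_of_injective f.injective]
    simp
  calc #{g : α ↪ γ | ∀ x ∈ S, g x ∈ C}
      = Fintype.card {p : Σ f : S ↪ γ, ↥(S : Set α)ᶜ ↪ ↥(Set.range f)ᶜ // ∀ x, p.1 x ∈ C} := by
        rw [← Fintype.card_subtype]
        exact Fintype.card_congr (e.subtypeEquiv fun g => by simp [he])
    _ = Fintype.card (Σ f : {f : S ↪ γ // ∀ x, f x ∈ C}, ↥(S : Set α)ᶜ ↪ ↥(Set.range f.1)ᶜ) :=
        Fintype.card_congr (Equiv.subtypeSigmaEquiv
          (fun f : S ↪ γ => ↥(S : Set α)ᶜ ↪ ↥(Set.range f)ᶜ) fun f => ∀ x, f x ∈ C)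
    _ = Fintype.card (S ↪ C) *
          (Fintype.card γ - S.card).descFactorial (Fintype.card α - S.card) := by
        rw [Fintype.card_sigma]
        simp only [hfiber, sum_const, smul_eq_mul]
        congr 1
        exact Fintype.card_congr (Equiv.codRestrict _ _)
    _ = _ := by rw [Fintype.card_embedding_eq]; simp

theorem card_embedding_mapsTo_prod_mul_pow_le (S : Finset α) (W : Finset β)
    (hW : W.card ≤ Fintype.card β) :
    #{g : α ↪ β × κ | ∀ x ∈ S, g x ∈ W ×ˢ univ} * Fintype.card β ^ S.card ≤
      W.card ^ S.card * Fintype.card (α ↪ β × κ) := by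
  rw [card_embedding_mapsTo, Fintype.card_embedding_eq, card_product, Finset.card_univ,
    Fintype.card_prod, ← Nat.descFactorial_mul_descFactorial (card_le_univ S)]
  set D := (Fintype.card β * Fintype.card κ - S.card).descFactorial (Fintype.card α - S.card)
  calc (W.card * Fintype.card κ).descFactorial S.card * D * Fintype.card β ^ S.card
      = (W.card * Fintype.card κ).descFactorial S.card * Fintype.card β ^ S.card * D := by ring
    _ ≤ W.card ^ S.card * (Fintype.card β * Fintype.card κ).descFactorial S.card * D :=
        Nat.mul_le_mul_right _ (descFactorial_mul_mul_pow_le _ _ hW)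
    _ = _ := by ring

noncomputable def tuplesMapsTo (n : ℕ) (S : Finset α) (W : Finset β) :
    Finset (Fin n → (α ↪ β × κ)) :=
  Fintype.piFinset fun _ => {g | ∀ x ∈ S, g x ∈ W ×ˢ univ}

theorem card_tuplesMapsTo_mul_pow_le (n : ℕ) (S : Finset α) (W : Finset β)
    (hW : W.card ≤ Fintype.card β) :
    #(tuplesMapsTo (κ := κ) n S W) * Fintype.card β ^ (n * S.card) ≤
      W.card ^ (n * S.card) * Fintype.card (α ↪ β × κ) ^ n := by
  rw [tuplesMapsTo, Fintype.card_piFinset, prod_const, Finset.card_univ, Fintype.card_fin,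
    pow_mul', pow_mul', ← mul_pow, ← mul_pow]
  exact Nat.pow_le_pow_left (card_embedding_mapsTo_prod_mul_pow_le S W hW) n

theorem card_biUnion_tuplesMapsTo_mul_four_pow_le {c d s : ℕ}
    (H : 36 * Fintype.card α * c ^ d ≤ Fintype.card β ^ (d + 1))
    (hs : 1 ≤ s) (hsc : s ≤ c) (hcb : c ≤ Fintype.card β) :
    #((powersetCard s (univ : Finset α) ×ˢ powersetCard (s - 1) (univ : Finset β)).biUnion
        fun p => tuplesMapsTo (κ := κ) (d + 2) p.1 p.2) * 4 ^ s ≤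
      Fintype.card (α ↪ β × κ) ^ (d + 2) := by
  set b := Fintype.card β
  set T := Fintype.card (α ↪ β × κ)
  set P := (powersetCard s (univ : Finset α) ×ˢ powersetCard (s - 1) (univ : Finset β))
  refine Nat.le_of_mul_le_mul_right ?_ (pow_pos (show 0 < b by omega) ((d + 2) * s))
  calc #(P.biUnion fun p => tuplesMapsTo (κ := κ) (d + 2) p.1 p.2) * 4 ^ s * b ^ ((d + 2) * s)
      ≤ (∑ p ∈ P, #(tuplesMapsTo (κ := κ) (d + 2) p.1 p.2) * b ^ ((d + 2) * s)) * 4 ^ s := by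
        rw [← sum_mul, mul_right_comm]
        gcongr
        exact card_biUnion_le
    _ ≤ (∑ _p ∈ P, (s - 1) ^ ((d + 2) * s) * T ^ (d + 2)) * 4 ^ s := by
        refine Nat.mul_le_mul_right _ (sum_le_sum fun p hp => ?_)
        obtain ⟨hS, hW⟩ := mem_product.1 hp
        rw [mem_powersetCard] at hS hW
        rw [← hW.2, ← hS.2]
        exact card_tuplesMapsTo_mul_pow_le _ _ _ (card_le_univ _)
    _ = (Fintype.card α).choose s * b.choose (s - 1) * (s - 1) ^ ((d + 2) * s) * 4 ^ s *
          T ^ (d + 2) := by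
        rw [sum_const, card_product, card_powersetCard, card_powersetCard, Finset.card_univ,
          Finset.card_univ, smul_eq_mul]
        ring
    _ ≤ b ^ ((d + 2) * s) * T ^ (d + 2) :=
        Nat.mul_le_mul_right _ (choose_mul_choose_mul_pow_le H hs hsc hcb)
    _ = T ^ (d + 2) * b ^ ((d + 2) * s) := Nat.mul_comm _ _

theorem exists_expanding_embeddings (d c : ℕ)
    (hα : Fintype.card α ≤ Fintype.card β * Fintype.card κ) (hc : c ≤ Fintype.card β)
    (H : 36 * Fintype.card α * c ^ d ≤ Fintype.card β ^ (d + 1)) :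
    ∃ f : Fin (d + 2) → (α ↪ β × κ),
      ∀ S : Finset α, S.card ≤ c → S.card ≤ (embNeighbors f S).card := by
  by_contra! hbad
  have hT : 0 < Fintype.card (α ↪ β × κ) := Fintype.card_pos_iff.2
    (Function.Embedding.nonempty_of_card_le (by rwa [Fintype.card_prod]))
  have hcover : (univ : Finset (Fin (d + 2) → (α ↪ β × κ))) ⊆
      (Icc 1 c).biUnion fun s => (powersetCard s univ ×ˢ powersetCard (s - 1) univ).biUnion
        fun p => tuplesMapsTo (d + 2) p.1 p.2 := by
    intro f _
    obtain ⟨S, hSc, hlt⟩ := hbad f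
    obtain ⟨W, hNW, -, hW⟩ := exists_subsuperset_card_eq (subset_univ (embNeighbors f S))
      (show (embNeighbors f S).card ≤ S.card - 1 by omega)
      (show S.card - 1 ≤ (univ : Finset β).card by rw [Finset.card_univ]; omega)
    simp only [mem_biUnion, mem_Icc, mem_product, mem_powersetCard, tuplesMapsTo,
      Fintype.mem_piFinset, mem_filter]
    exact ⟨S.card, ⟨by omega, hSc⟩, (S, W), ⟨⟨subset_univ _, rfl⟩, subset_univ _, hW⟩,
      fun i => ⟨mem_univ _, fun x hx =>
        ⟨hNW (mem_embNeighbors.2 ⟨i, x, hx, rfl⟩), mem_univ _⟩⟩⟩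
  have hle := (card_le_card hcover).trans card_biUnion_le
  rw [Finset.card_univ, Fintype.card_fun, Fintype.card_fin] at hle
  exact hle.not_gt (sum_lt_of_mul_four_pow_le (pow_pos hT _) fun s hs =>
    card_biUnion_tuplesMapsTo_mul_four_pow_le H (mem_Icc.1 hs).1 (mem_Icc.1 hs).2 hc)

end Embeddings

theorem card_le_card_biUnion_of_expansion {ι α : Type*} [Fintype ι] [DecidableEq ι]
    [DecidableEq α] (t : ι → Finset α) (s : Finset α) (hts : ∀ i, t i ⊆ s)
    (hs : s.card = Fintype.card ι) (k : ℕ)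
    (hsmall : ∀ A : Finset ι, A.card ≤ k → A.card ≤ (A.biUnion t).card)
    (hlarge : ∀ S ⊆ s, S.card ≤ Fintype.card ι - k → S.card ≤ #{i | ∃ x ∈ S, x ∈ t i})
    (A : Finset ι) : A.card ≤ (A.biUnion t).card := by
  by_cases hA : A.card ≤ k
  · exact hsmall A hA
  obtain ⟨A', hA'A, hA'k⟩ := exists_subset_card_eq (le_of_not_ge hA)
  have hk : k ≤ (A.biUnion t).card := hA'k ▸ (hsmall A' hA'k.le).trans
    (card_le_card (biUnion_subset_biUnion_of_subset_left t hA'A))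
  by_contra! hlt
  have hsub : A.biUnion t ⊆ s := biUnion_subset.2 fun i _ => hts i
  have hS : (s \ A.biUnion t).card = Fintype.card ι - (A.biUnion t).card := by
    rw [card_sdiff_of_subset hsub, hs]
  have hout : #{i | ∃ x ∈ s \ A.biUnion t, x ∈ t i} ≤ Aᶜ.card := by
    refine card_le_card fun i hi => ?_
    obtain ⟨x, hx, hxi⟩ := (mem_filter.1 hi).2
    exact mem_compl.2 fun hiA => (mem_sdiff.1 hx).2 (mem_biUnion.2 ⟨i, hiA, hxi⟩)
  have hexpand := hlarge (s \ A.biUnion t) sdiff_subset (by omega)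
  have hAι := card_le_univ A
  rw [card_compl] at hout
  omega

theorem exists_matching_of_hall {X Y Z : Type*} [Fintype Y] [Fintype Z] [DecidableEq X]
    [DecidableEq Y] [DecidableEq Z] (B : Finset ((X ⊕ Y) × Z)) (X' : Finset X)
    (hcard : X'.card + Fintype.card Y = Fintype.card Z)
    (hall : ∀ A : Finset Z,
      A.card ≤ (A.biUnion fun z => {l ∈ X'.disjSum univ | (l, z) ∈ B}).card) :
    ∃ M ⊆ B,
      (∀ e ∈ M, ∀ x, e.1 = Sum.inl x → x ∈ X') ∧
      (∀ x ∈ X', ∃! e, e ∈ M ∧ e.1 = Sum.inl x) ∧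
      (∀ y : Y, ∃! e, e ∈ M ∧ e.1 = Sum.inr y) ∧
      (∀ z : Z, ∃! e, e ∈ M ∧ e.2 = z) := by
  obtain ⟨f, hf, hft⟩ := (all_card_le_biUnion_card_iff_exists_injective _).1 hall
  simp only [mem_filter] at hft
  have hrange : univ.image f = X'.disjSum univ :=
    eq_of_subset_of_card_le (image_subset_iff.2 fun z _ => (hft z).1) (by
      rw [card_image_of_injective _ hf, card_disjSum, Finset.card_univ, Finset.card_univ, hcard])
  set M := univ.image fun z => (f z, z)
  have hM : ∀ e ∈ M, ∃ z, e = (f z, z) := fun e he => by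
    obtain ⟨z, -, rfl⟩ := mem_image.1 he
    exact ⟨z, rfl⟩
  have hmatch : ∀ l ∈ X'.disjSum univ, ∃! e, e ∈ M ∧ e.1 = l := by
    intro l hl
    obtain ⟨z, -, rfl⟩ := mem_image.1 (hrange ▸ hl)
    refine ⟨(f z, z), ⟨mem_image_of_mem _ (mem_univ z), rfl⟩, ?_⟩
    rintro e ⟨he, hez⟩
    obtain ⟨z', rfl⟩ := hM e he
    rw [hf hez]
  refine ⟨M, image_subset_iff.2 fun z _ => (hft z).2, ?_,
    fun x hx => hmatch _ (inl_mem_disjSum.2 hx),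
    fun y => hmatch _ (inr_mem_disjSum.2 (mem_univ y)), fun z => ?_⟩
  · intro e he x hx
    obtain ⟨z, rfl⟩ := hM e he
    have hz := (hft z).1
    rw [show f z = Sum.inl x from hx] at hz
    exact inl_mem_disjSum.1 hz
  · refine ⟨(f z, z), ⟨mem_image_of_mem _ (mem_univ z), rfl⟩, ?_⟩
    rintro e ⟨he, rfl⟩
    obtain ⟨z', rfl⟩ := hM e he
    rfl

section Template

variable {X Y Z ι κ : Type*} [Fintype X] [Fintype Y] [Fintype Z] [Fintype ι]
  [DecidableEq X] [DecidableEq Y] [DecidableEq Z]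

def templateGraph (θ : ι → (X ⊕ Y ↪ Z × κ)) (φ : ι → (Z ↪ Y × κ)) : Finset ((X ⊕ Y) × Z) :=
  embGraph θ ∪ (embGraph φ).image fun e => (Sum.inr e.2, e.1)

variable (θ : ι → (X ⊕ Y ↪ Z × κ)) (φ : ι → (Z ↪ Y × κ))

theorem card_filter_templateGraph_fst_le [Fintype κ] (u : X ⊕ Y) :
    #{e ∈ templateGraph θ φ | e.1 = u} ≤ Fintype.card ι + Fintype.card ι * Fintype.card κ := by
  rw [templateGraph, filter_union, filter_image]
  refine (card_union_le _ _).trans (add_le_add (card_filter_embGraph_fst_le θ u) ?_)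
  refine card_image_le.trans ?_
  rcases u with x | y
  · simp
  · simpa using card_filter_embGraph_snd_le φ y

theorem card_filter_templateGraph_snd_le [Fintype κ] (z : Z) :
    #{e ∈ templateGraph θ φ | e.2 = z} ≤ Fintype.card ι * Fintype.card κ + Fintype.card ι := by
  rw [templateGraph, filter_union, filter_image]
  exact (card_union_le _ _).trans (add_le_add (card_filter_embGraph_snd_le θ z)
    (card_image_le.trans (card_filter_embGraph_fst_le φ z)))

theorem templateGraph_exists_matching (k : ℕ)
    (hφ : ∀ A : Finset Z, A.card ≤ k → A.card ≤ (embNeighbors φ A).card)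
    (hθ : ∀ S : Finset (X ⊕ Y), S.card ≤ Fintype.card Z - k → S.card ≤ (embNeighbors θ S).card)
    (X' : Finset X) (hX' : X'.card + Fintype.card Y = Fintype.card Z) :
    ∃ M ⊆ templateGraph θ φ,
      (∀ e ∈ M, ∀ x, e.1 = Sum.inl x → x ∈ X') ∧
      (∀ x ∈ X', ∃! e, e ∈ M ∧ e.1 = Sum.inl x) ∧
      (∀ y : Y, ∃! e, e ∈ M ∧ e.1 = Sum.inr y) ∧
      (∀ z : Z, ∃! e, e ∈ M ∧ e.2 = z) := by
  refine exists_matching_of_hall _ X' hX' (card_le_card_biUnion_of_expansion _ (X'.disjSum univ)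
    (fun z => filter_subset _ _) (by rw [card_disjSum, Finset.card_univ, hX']) k ?_ ?_)
  · intro A hA
    refine (hφ A hA).trans (card_le_card_of_injOn Sum.inr (fun y hy => ?_) Sum.inr_injective.injOn)
    obtain ⟨i, z, hz, rfl⟩ := mem_embNeighbors.1 hy
    refine mem_biUnion.2 ⟨z, hz, mem_filter.2 ⟨inr_mem_disjSum.2 (mem_univ _), ?_⟩⟩
    exact mem_union_right _ (mem_image.2 ⟨(z, (φ i z).1), mem_embGraph.2 ⟨i, rfl⟩, rfl⟩)
  · intro S hS hSk
    refine (hθ S hSk).trans (card_le_card fun z hz => ?_)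
    obtain ⟨i, l, hl, rfl⟩ := mem_embNeighbors.1 hz
    exact mem_filter.2 ⟨mem_univ _, l, hl,
      mem_filter.2 ⟨hS hl, mem_union_left _ (mem_embGraph.2 ⟨i, rfl⟩)⟩⟩

end Template

end TemplateGraph

theorem template_bipartite_graph_general (β : ℝ) (hβ1 : β ≤ 1) :
    ∃ m₀ : ℕ, ∀ m : ℕ, m₀ ≤ m →
      ∃ B : Finset ((Fin (m + ⌊β * (m : ℝ)⌋₊) ⊕ Fin (2 * m)) × Fin (3 * m)),
        (∀ u : Fin (m + ⌊β * (m : ℝ)⌋₊) ⊕ Fin (2 * m),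
          (B.filter fun e => e.1 = u).card ≤ 100) ∧
        (∀ z : Fin (3 * m), (B.filter fun e => e.2 = z).card ≤ 100) ∧
        ∀ X' : Finset (Fin (m + ⌊β * (m : ℝ)⌋₊)), X'.card = m →
          ∃ M ⊆ B,
            (∀ e ∈ M, ∀ x, e.1 = Sum.inl x → x ∈ X') ∧
            (∀ x ∈ X', ∃! e, e ∈ M ∧ e.1 = Sum.inl x) ∧
            (∀ y : Fin (2 * m), ∃! e, e ∈ M ∧ e.1 = Sum.inr y) ∧
            (∀ z : Fin (3 * m), ∃! e, e ∈ M ∧ e.2 = z) := by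
  refine ⟨0, fun m _ => ?_⟩
  set t := ⌊β * (m : ℝ)⌋₊
  have ht : t ≤ m := Nat.floor_le_of_le (mul_le_of_le_one_left m.cast_nonneg hβ1)
  have hθc : 36 * (m + t + 2 * m) * (2 * m) ^ 23 ≤ (3 * m) ^ (23 + 1) :=
    calc 36 * (m + t + 2 * m) * (2 * m) ^ 23 ≤ 36 * (4 * m) * (2 * m) ^ 23 := by gcongr; omega
      _ ≤ (3 * m) ^ (23 + 1) := by ring_nf; omega
  have hφc : 36 * (3 * m) * m ^ 23 ≤ (2 * m) ^ (23 + 1) := by ring_nf; omega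
  obtain ⟨θ, hθ⟩ := TemplateGraph.exists_expanding_embeddings (α := Fin (m + t) ⊕ Fin (2 * m))
    (β := Fin (3 * m)) (κ := Fin 2) 23 (2 * m)
    (by simp only [Fintype.card_sum, Fintype.card_fin]; omega)
    (by simp only [Fintype.card_fin]; omega)
    (by simpa only [Fintype.card_sum, Fintype.card_fin] using hθc)
  obtain ⟨φ, hφ⟩ := TemplateGraph.exists_expanding_embeddings (α := Fin (3 * m))
    (β := Fin (2 * m)) (κ := Fin 2) 23 m
    (by simp only [Fintype.card_fin]; omega) (by simp only [Fintype.card_fin]; omega)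
    (by simpa only [Fintype.card_fin] using hφc)
  refine ⟨TemplateGraph.templateGraph θ φ,
    fun u => (TemplateGraph.card_filter_templateGraph_fst_le θ φ u).trans (by simp),
    fun z => (TemplateGraph.card_filter_templateGraph_snd_le θ φ z).trans (by simp),
    fun X' hX' => TemplateGraph.templateGraph_exists_matching θ φ m hφ (fun S hS => hθ S ?_) X' ?_⟩
  · simp only [Fintype.card_fin] at hS
    omega
  · simp only [Fintype.card_fin, hX']
    omega

/-- Lemma 3.2, Nenadov–Pehova. For every `0 < β ≤ 1` there exists
`m₀` such that for every `m ≥ m₀` there is a bipartite graph `B` with vertex classes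
`X_m ∪ Y_m` and `Z_m`, with `Δ(B) ≤ 100`, `|X_m| = m + ⌊βm⌋`, `|Y_m| = 2m`,
`|Z_m| = 3m`, such that for every `X'_m ⊆ X_m` with `|X'_m| = m`, the induced bipartite
graph `B[X'_m ∪ Y_m, Z_m]` has a perfect matching. -/
theorem template_bipartite_graph (β : ℝ) (hβ0 : 0 < β) (hβ1 : β ≤ 1) :
    ∃ m₀ : ℕ, ∀ m : ℕ, m₀ ≤ m →
      ∃ B : Finset ((Fin (m + ⌊β * (m : ℝ)⌋₊) ⊕ Fin (2 * m)) × Fin (3 * m)),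
        (∀ u : Fin (m + ⌊β * (m : ℝ)⌋₊) ⊕ Fin (2 * m),
          (B.filter fun e => e.1 = u).card ≤ 100) ∧
        (∀ z : Fin (3 * m), (B.filter fun e => e.2 = z).card ≤ 100) ∧
        ∀ X' : Finset (Fin (m + ⌊β * (m : ℝ)⌋₊)), X'.card = m →
          ∃ M ⊆ B,
            (∀ e ∈ M, ∀ x, e.1 = Sum.inl x → x ∈ X') ∧
            (∀ x ∈ X', ∃! e, e ∈ M ∧ e.1 = Sum.inl x) ∧
            (∀ y : Fin (2 * m), ∃! e, e ∈ M ∧ e.1 = Sum.inr y) ∧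
            (∀ z : Fin (3 * m), ∃! e, e ∈ M ∧ e.2 = z) :=
  template_bipartite_graph_general β hβ1
end

section
/- Let F be a k-graph with at least one edge. For every θ > 0 there is a constant c = c(θ,F) > 0 such that if p = p(n) ≤ c·n^{−1/d*(F)}, then the probability that H^{(k)}(n,p) contains an F-tiling covering at least θn vertices tends to 0 as n → ∞. -/
/-!
Let `F₀ ⊆ F` have `v` vertices and `e` edges with `e / (v - 1) = d*(F)`. A tiling covering
`θ n` vertices has at least `m = ⌈θ n / b⌉` members, and their restrictions to `V(F₀)` are `m`
vertex-disjoint copies of `F₀`. A union bound over the at most `C(n^v, m) ≤ n^{vm} / m!` such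
families, each present with probability `p^{em}`, bounds the probability by `(n^v p^e)^m / m!`.
With `c = min 1 (θ / 4b)` we have `n^v p^e ≤ c^e n ≤ m / 4`, and
`(m / 4)^m / m! ≤ (exp 1 / 4)^m → 0`.
-/

open Finset Filter Topology

open scoped Nat

section RandomHypergraph

variable {n k : ℕ} {p : ℝ}

lemma rProb_nonneg (hp₀ : 0 ≤ p) (hp₁ : p ≤ 1) (P : Finset (Finset (Fin n)) → Prop) :
    0 ≤ rProb n k p P := by
  have := sub_nonneg.2 hp₁
  exact sum_nonneg fun E _ => by split_ifs <;> positivity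

lemma rProb_eq_sum_filter (P : Finset (Finset (Fin n)) → Prop) [DecidablePred P] :
    rProb n k p P = ∑ E ∈ (allEdges n k).powerset with P E,
      p ^ #E * (1 - p) ^ (#(allEdges n k) - #E) := by
  rw [rProb, sum_filter]
  exact sum_congr rfl fun E _ => by by_cases h : P E <;> simp [h]

lemma rProb_le_sum_of_imp (hp₀ : 0 ≤ p) (hp₁ : p ≤ 1) {P : Finset (Finset (Fin n)) → Prop}
    {ι : Type*} (I : Finset ι) (Q : ι → Finset (Finset (Fin n)) → Prop)
    (h : ∀ E, P E → ∃ i ∈ I, Q i E) :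
    rProb n k p P ≤ ∑ i ∈ I, rProb n k p (Q i) := by
  classical
  have := sub_nonneg.2 hp₁
  unfold rProb
  rw [sum_comm]
  refine sum_le_sum fun E _ => ?_
  split_ifs with hPE
  · obtain ⟨i, hi, hQ⟩ := h E hPE
    have := single_le_sum (f := fun j => if Q j E then p ^ #E * (1 - p) ^ (#(allEdges n k) - #E)
      else 0) (fun j _ => by split_ifs <;> positivity) hi
    rwa [if_pos hQ] at this
  · exact sum_nonneg fun i _ => by split_ifs <;> positivity

lemma rProb_mono (hp₀ : 0 ≤ p) (hp₁ : p ≤ 1) {P Q : Finset (Finset (Fin n)) → Prop}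
    (h : ∀ E, P E → Q E) : rProb n k p P ≤ rProb n k p Q := by
  simpa using rProb_le_sum_of_imp (k := k) hp₀ hp₁ {()} (fun _ => Q)
    fun E hE => ⟨(), mem_singleton_self _, h E hE⟩

lemma rProb_superset_eq_pow {W : Finset (Finset (Fin n))} (hW : W ⊆ allEdges n k) :
    rProb n k p (W ⊆ ·) = p ^ #W := by
  classical
  set A := allEdges n k
  have hcard : #(A \ W) = #A - #W := card_sdiff_of_subset hW
  rw [rProb_eq_sum_filter]
  calc ∑ E ∈ A.powerset with W ⊆ E, p ^ #E * (1 - p) ^ (#A - #E)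
      = ∑ E ∈ (A \ W).powerset, p ^ #(E ∪ W) * (1 - p) ^ (#A - #(E ∪ W)) := by
        refine sum_nbij' (· \ W) (· ∪ W) ?_ ?_ ?_ ?_ ?_ <;>
          simp only [mem_filter, mem_powerset]
        · exact fun E ⟨hEA, _⟩ => sdiff_subset_sdiff hEA le_rfl
        · exact fun E hE => ⟨union_subset (hE.trans sdiff_subset) hW, subset_union_right⟩
        · exact fun E ⟨_, hWE⟩ => sdiff_union_of_subset hWE
        · exact fun E hE => union_sdiff_cancel_right (disjoint_of_subset_left hE sdiff_disjoint)
        · exact fun E ⟨_, hWE⟩ => by rw [sdiff_union_of_subset hWE]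
    _ = p ^ #W * ∑ E ∈ (A \ W).powerset, p ^ #E * (1 - p) ^ (#(A \ W) - #E) := by
        rw [mul_sum]
        refine sum_congr rfl fun E hE => ?_
        have hEA := mem_powerset.1 hE
        rw [card_union_of_disjoint (disjoint_of_subset_left hEA sdiff_disjoint), pow_add,
          hcard, Nat.sub_sub, add_comm #W]
        ring
    _ = p ^ #W := by rw [sum_pow_mul_eq_add_pow, add_sub_cancel, one_pow, mul_one]

end RandomHypergraph

section DisjointCopies

open Function

variable {α : Type*} {n m : ℕ}

def copyEdges (F₀ : Finset (Finset α)) (𝒮 : Finset (α → Fin n)) : Finset (Finset (Fin n)) :=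
  𝒮.biUnion fun g => F₀.image (image g)

lemma copyEdges_subset_allEdges {F₀ : Finset (Finset α)} {k : ℕ} (hF₀ : ∀ e ∈ F₀, #e = k)
    {𝒮 : Finset (α → Fin n)} (h𝒮 : ∀ g ∈ 𝒮, Injective g) :
    copyEdges F₀ 𝒮 ⊆ allEdges n k := by
  classical
  simp only [copyEdges, subset_iff, mem_biUnion, mem_image]
  rintro _ ⟨g, hg, e, he, rfl⟩
  simp [allEdges, card_image_of_injective _ (h𝒮 g hg), hF₀ e he]

variable [Fintype α]

variable (α n m) in
open Classical in
noncomputable def disjointEmbeddings : Finset (Finset (α → Fin n)) :=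
  {𝒮 ∈ univ.powersetCard m | (∀ g ∈ 𝒮, Injective g) ∧
    (𝒮 : Set (α → Fin n)).PairwiseDisjoint fun g => univ.image g}

lemma mem_disjointEmbeddings {𝒮 : Finset (α → Fin n)} :
    𝒮 ∈ disjointEmbeddings α n m ↔ #𝒮 = m ∧ (∀ g ∈ 𝒮, Injective g) ∧
      (𝒮 : Set (α → Fin n)).PairwiseDisjoint fun g => univ.image g := by
  simp [disjointEmbeddings]

lemma card_disjointEmbeddings_le :
    #(disjointEmbeddings α n m) ≤ (n ^ Fintype.card α).choose m := by
  classical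
  calc #(disjointEmbeddings α n m) ≤ #((univ : Finset (α → Fin n)).powersetCard m) :=
        card_le_card (filter_subset _ _)
    _ = _ := by simp

lemma card_copyEdges {F₀ : Finset (Finset α)} (hF₀ : ∀ e ∈ F₀, e.Nonempty)
    {𝒮 : Finset (α → Fin n)} (h𝒮 : 𝒮 ∈ disjointEmbeddings α n m) :
    #(copyEdges F₀ 𝒮) = m * #F₀ := by
  classical
  obtain ⟨hcard, hinj, hdisj⟩ := mem_disjointEmbeddings.1 h𝒮
  rw [copyEdges, card_biUnion, sum_congr rfl fun g hg =>
    card_image_of_injective _ (image_injective (hinj g hg)), sum_const, smul_eq_mul, hcard]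
  intro g hg g' hg' hne
  simp only [onFun, disjoint_left, mem_image, not_exists, not_and]
  rintro _ ⟨e, he, rfl⟩ e' he' hee'
  obtain ⟨x, hx⟩ := hF₀ e he
  have hxg' : g x ∈ univ.image g' :=
    image_subset_image (subset_univ e') (hee' ▸ mem_image_of_mem g hx)
  exact disjoint_left.1 (hdisj hg hg' hne) (mem_image_of_mem g (mem_univ x)) hxg'

lemma exists_disjointEmbeddings_of_tiling [Nonempty α] {b : ℕ}
    {F : Finset (Finset (Fin b))} {F₀ : Finset (Finset α)} {ι : α → Fin b} (hι : Injective ι)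
    (hF₀ : ∀ e ∈ F₀, e.image ι ∈ F) {E : Finset (Finset (Fin n))} {T : Finset (Fin b → Fin n)}
    (hT : ∀ f ∈ T, IsCopyIn F E f)
    (hdisj : (T : Set (Fin b → Fin n)).PairwiseDisjoint fun f => univ.image f) (hm : m ≤ #T) :
    ∃ 𝒮 ∈ disjointEmbeddings α n m, copyEdges F₀ 𝒮 ⊆ E := by
  classical
  obtain ⟨T', hT'T, hT'⟩ := exists_subset_card_eq hm
  have himage (f : Fin b → Fin n) : univ.image (f ∘ ι) ⊆ univ.image f := by
    rw [← image_image]; exact image_subset_image (subset_univ _)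
  have hrestrict : Set.InjOn (· ∘ ι) (T' : Set (Fin b → Fin n)) := fun f hf g hg hfg => by
    obtain ⟨x⟩ := ‹Nonempty α›
    refine hdisj.elim_finset (hT'T hf) (hT'T hg) (f (ι x)) (mem_image_of_mem f (mem_univ _)) ?_
    rw [show f (ι x) = g (ι x) from congrFun hfg x]
    exact mem_image_of_mem g (mem_univ _)
  refine ⟨T'.image (· ∘ ι), mem_disjointEmbeddings.2 ⟨?_, ?_, ?_⟩, ?_⟩
  · rw [card_image_of_injOn hrestrict, hT']
  · simp only [mem_image]
    rintro _ ⟨f, hf, rfl⟩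
    exact (hT f (hT'T hf)).1.comp hι
  · rw [coe_image]
    rintro _ ⟨f, hf, rfl⟩ _ ⟨g, hg, rfl⟩ hne
    exact (hdisj (hT'T hf) (hT'T hg) fun h => hne (h ▸ rfl)).mono (himage f) (himage g)
  · simp only [copyEdges, subset_iff, mem_biUnion, mem_image]
    rintro _ ⟨_, ⟨f, hf, rfl⟩, e, he, rfl⟩
    rw [← image_image]
    exact (hT f (hT'T hf)).2 _ (hF₀ e he)

lemma rProb_exists_disjointEmbeddings_le {k : ℕ} {p : ℝ} (hp₀ : 0 ≤ p) (hp₁ : p ≤ 1)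
    (hk : 0 < k) {F₀ : Finset (Finset α)} (hF₀ : ∀ e ∈ F₀, #e = k) :
    rProb n k p (fun E => ∃ 𝒮 ∈ disjointEmbeddings α n m, copyEdges F₀ 𝒮 ⊆ E) ≤
      ((n : ℝ) ^ Fintype.card α * p ^ #F₀) ^ m / m ! := by
  have hne (e) (he : e ∈ F₀) : e.Nonempty := card_pos.1 (hF₀ e he ▸ hk)
  calc _ ≤ ∑ 𝒮 ∈ disjointEmbeddings α n m, rProb n k p (copyEdges F₀ 𝒮 ⊆ ·) :=
        rProb_le_sum_of_imp hp₀ hp₁ _ _ fun E => id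
    _ = #(disjointEmbeddings α n m) * p ^ (m * #F₀) := by
        rw [sum_congr rfl fun 𝒮 h𝒮 => by
          rw [rProb_superset_eq_pow (copyEdges_subset_allEdges hF₀
            (mem_disjointEmbeddings.1 h𝒮).2.1), card_copyEdges hne h𝒮], sum_const, nsmul_eq_mul]
    _ ≤ (n ^ Fintype.card α).choose m * p ^ (m * #F₀) := by
        gcongr; exact_mod_cast card_disjointEmbeddings_le
    _ ≤ ((n : ℝ) ^ Fintype.card α) ^ m / m ! * p ^ (m * #F₀) := by
        gcongr; exact_mod_cast Nat.choose_le_pow_div m _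
    _ = _ := by rw [mul_pow, pow_mul', div_mul_eq_mul_div]

end DisjointCopies

lemma exists_dStar_eq {α : Type*} {Vset : Finset α} {F : Finset (Finset α)} {e₀ : Finset α}
    (he₀ : e₀ ∈ F) (he₀V : e₀ ⊆ Vset) (h2 : 2 ≤ #e₀) :
    ∃ (V' : Finset α) (E' : Finset (Finset α)), E' ⊆ F ∧ (∀ e ∈ E', e ⊆ V') ∧
      2 ≤ #V' ∧ E'.Nonempty ∧ dStar Vset F = #E' / ((#V' : ℝ) - 1) := by
  classical
  set S : Set ℝ := { x : ℝ | ∃ (V' : Finset α) (E' : Finset (Finset α)), V' ⊆ Vset ∧ E' ⊆ F ∧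
    (∀ e ∈ E', e ⊆ V') ∧ 2 ≤ #V' ∧ x = (#E' : ℝ) / ((#V' : ℝ) - 1) }
  have hfin : S.Finite := by
    refine ((Vset.powerset ×ˢ F.powerset).finite_toSet.image
      fun q => (#q.2 : ℝ) / ((#q.1 : ℝ) - 1)).subset ?_
    rintro _ ⟨V', E', hV', hE', -, -, rfl⟩
    exact ⟨(V', E'), by simp [hV', hE'], rfl⟩
  have hmem : 1 / ((#e₀ : ℝ) - 1) ∈ S :=
    ⟨e₀, {e₀}, he₀V, singleton_subset_iff.2 he₀, by simp, h2, by simp⟩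
  have hpos : 0 < dStar Vset F := by
    have : (2 : ℝ) ≤ #e₀ := by exact_mod_cast h2
    exact (div_pos one_pos (by linarith)).trans_le (le_csSup hfin.bddAbove hmem)
  obtain ⟨V', E', -, hE'F, hE'V', hV', hd⟩ := Set.Nonempty.csSup_mem ⟨_, hmem⟩ hfin
  refine ⟨V', E', hE'F, hE'V', hV', card_pos.1 (Nat.pos_of_ne_zero fun h => ?_), hd⟩
  rw [dStar, hd, h] at hpos
  simp at hpos

lemma natCast_pow_mul_pow_le {n v e : ℕ} (hn : 0 < n) (he : e ≠ 0) {p c d : ℝ} (hp₀ : 0 ≤ p)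
    (hp : p ≤ c * (n : ℝ) ^ (-(1 / d))) (hd : d = e / ((v : ℝ) - 1)) :
    (n : ℝ) ^ v * p ^ e ≤ c ^ e * n := by
  have hn' : (0 : ℝ) < n := Nat.cast_pos.2 hn
  have hexp : ((n : ℝ) ^ (-(1 / d))) ^ e = (n : ℝ) ^ (1 - (v : ℝ)) := by
    rw [← Real.rpow_mul_natCast hn'.le, hd, one_div_div, neg_mul,
      div_mul_cancel₀ _ (Nat.cast_ne_zero.2 he), neg_sub]
  calc (n : ℝ) ^ v * p ^ e ≤ (n : ℝ) ^ v * (c * (n : ℝ) ^ (-(1 / d))) ^ e := by gcongr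
    _ = c ^ e * ((n : ℝ) ^ (v : ℝ) * (n : ℝ) ^ (1 - (v : ℝ))) := by
        rw [mul_pow, hexp, Real.rpow_natCast]; ring
    _ = c ^ e * n := by rw [← Real.rpow_add hn', add_sub_cancel, Real.rpow_one]

lemma div_pow_div_factorial_le {r : ℝ} (hr : 0 ≤ r) (t : ℕ) :
    ((t : ℝ) / r) ^ t / t ! ≤ (Real.exp 1 / r) ^ t := by
  rw [div_pow, div_pow, div_right_comm, Real.exp_one_pow]
  gcongr
  exact Real.pow_div_factorial_le_exp _ t.cast_nonneg t

lemma ceil_div_le_card_of_le_card_biUnion {b n : ℕ} (hb : 0 < b) {T : Finset (Fin b → Fin n)}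
    {x : ℝ} (hx : x ≤ #(T.biUnion fun f => univ.image f)) : ⌈x / b⌉₊ ≤ #T := by
  have hcover : #(T.biUnion fun f => univ.image f) ≤ #T * b :=
    card_biUnion_le_card_mul _ _ _ fun f _ => card_image_le.trans (card_fin b).le
  refine Nat.ceil_le.2 ((div_le_iff₀ (Nat.cast_pos.2 hb)).2 (hx.trans ?_))
  exact_mod_cast hcover

lemma rProb_tiling_le {n k b : ℕ} {p : ℝ} (hp₀ : 0 ≤ p) (hp₁ : p ≤ 1) (hk : 0 < k)
    {F : Finset (Finset (Fin b))} (hF : ∀ e ∈ F, #e = k) {V₀ : Finset (Fin b)}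
    {E₀ : Finset (Finset (Fin b))} (hE₀F : E₀ ⊆ F) (hE₀V₀ : ∀ e ∈ E₀, e ⊆ V₀)
    (hV₀ : V₀.Nonempty) (x : ℝ) :
    rProb n k p (fun E => ∃ T : Finset (Fin b → Fin n), (∀ f ∈ T, IsCopyIn F E f) ∧
        (∀ f ∈ T, ∀ g ∈ T, f ≠ g → Disjoint (univ.image f) (univ.image g)) ∧
        x ≤ #(T.biUnion fun f => univ.image f)) ≤
      ((n : ℝ) ^ #V₀ * p ^ #E₀) ^ ⌈x / b⌉₊ / ⌈x / b⌉₊ ! := by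
  classical
  have := hV₀.to_subtype
  have hb : 0 < b := hV₀.choose.pos
  -- `E₀` relabelled on the vertex type `V₀`: its candidate copies number at most `n ^ #V₀`
  set F₀ := E₀.image (Finset.subtype (· ∈ V₀))
  have hval (e) (he : e ∈ E₀) : (e.subtype (· ∈ V₀)).image Subtype.val = e := by
    simpa [map_eq_image] using subtype_map_of_mem (hE₀V₀ e he)
  have hF₀E₀ : #F₀ = #E₀ := card_image_of_injOn fun e he e' he' h => by
    rw [← hval e he, ← hval e' he']; exact congrArg _ h
  have hF₀k (e) (he : e ∈ F₀) : #e = k := by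
    obtain ⟨e, he', rfl⟩ := mem_image.1 he
    rw [← hF e (hE₀F he'), ← card_image_of_injective _ Subtype.val_injective, hval e he']
  have hF₀F (e) (he : e ∈ F₀) : e.image Subtype.val ∈ F := by
    obtain ⟨e, he', rfl⟩ := mem_image.1 he
    rw [hval e he']; exact hE₀F he'
  calc _ ≤ rProb n k p (fun E => ∃ 𝒮 ∈ disjointEmbeddings V₀ n ⌈x / b⌉₊, copyEdges F₀ 𝒮 ⊆ E) :=
        rProb_mono hp₀ hp₁ fun E ⟨T, hT, hdisj, hx⟩ =>
          exists_disjointEmbeddings_of_tiling Subtype.val_injective hF₀F hT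
            (fun f hf g hg hne => hdisj f hf g hg hne) (ceil_div_le_card_of_le_card_biUnion hb hx)
    _ ≤ _ := by simpa [hF₀E₀] using rProb_exists_disjointEmbeddings_le hp₀ hp₁ hk hF₀k

/-- Proposition 3.1. Let `F` be a `k`-graph with at least one edge.
For every `θ > 0` there is `c = c(θ,F) > 0` such that if `p = p(n) ≤ c n^{-1/d*(F)}`,
then a.a.s. `H^{(k)}(n,p)` contains no `F`-tiling covering at least `θn` vertices. -/
theorem no_large_tiling
    (k : ℕ) (hk : 2 ≤ k) (b : ℕ) (F : Finset (Finset (Fin b)))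
    (hF : ∀ e ∈ F, e.card = k) (hFne : F.Nonempty) (θ : ℝ) (hθ : 0 < θ) :
    ∃ c : ℝ, 0 < c ∧ ∀ p : ℕ → ℝ,
      (∀ n : ℕ, 0 ≤ p n ∧ p n ≤ 1 ∧
        p n ≤ c * (n : ℝ) ^ (-(1 / dStar (Finset.univ : Finset (Fin b)) F))) →
      Tendsto
        (fun n : ℕ => rProb n k (p n) fun E =>
          ∃ T : Finset (Fin b → Fin n),
            (∀ f ∈ T, IsCopyIn F E f) ∧
            (∀ f ∈ T, ∀ g ∈ T, f ≠ g →
              Disjoint (Finset.univ.image f) (Finset.univ.image g)) ∧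
            θ * n ≤ ((T.biUnion fun f => Finset.univ.image f).card : ℝ))
        atTop (𝓝 0) := by
  obtain ⟨e₀, he₀⟩ := hFne
  obtain ⟨V₀, E₀, hE₀F, hE₀V₀, hV₀, hE₀, hd⟩ :=
    exists_dStar_eq he₀ (subset_univ e₀) ((hF e₀ he₀).symm ▸ hk)
  have hV₀ne : V₀.Nonempty := card_pos.1 (by omega)
  have hb : (0 : ℝ) < b := Nat.cast_pos.2 hV₀ne.choose.pos
  set c := min 1 (θ / (4 * b))
  refine ⟨c, lt_min one_pos (by positivity), fun p hp => ?_⟩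
  set m : ℕ → ℕ := fun n => ⌈θ * n / b⌉₊
  have hm : Tendsto m atTop atTop := tendsto_nat_ceil_atTop.comp
    ((tendsto_natCast_atTop_atTop.const_mul_atTop hθ).atTop_div_const hb)
  have hdensity (n : ℕ) (hn : 0 < n) : (n : ℝ) ^ #V₀ * p n ^ #E₀ ≤ m n / 4 := calc
    _ ≤ c ^ #E₀ * n := natCast_pow_mul_pow_le hn hE₀.card_pos.ne' (hp n).1 (hp n).2.2 hd
    _ ≤ θ / (4 * b) * n := by
        gcongr
        exact (pow_le_of_le_one (by positivity) (min_le_left _ _) hE₀.card_pos.ne').trans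
          (min_le_right _ _)
    _ = θ * n / b / 4 := by field_simp
    _ ≤ m n / 4 := by gcongr; exact Nat.le_ceil _
  have hq : Real.exp 1 / 4 < 1 := by
    have := Real.exp_one_lt_d9
    rw [div_lt_one four_pos]; linarith
  refine squeeze_zero' (Eventually.of_forall fun n => rProb_nonneg (hp n).1 (hp n).2.1 _) ?_
    ((tendsto_pow_atTop_nhds_zero_of_lt_one (by positivity) hq).comp hm)
  filter_upwards [eventually_gt_atTop 0] with n hn
  calc _ ≤ ((n : ℝ) ^ #V₀ * p n ^ #E₀) ^ m n / (m n)! :=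
        rProb_tiling_le (hp n).1 (hp n).2.1 (by omega) hF hE₀F hE₀V₀ hV₀ne _
    _ ≤ ((m n : ℝ) / 4) ^ m n / (m n)! := by have := (hp n).1; gcongr; exact hdensity n hn
    _ ≤ (Real.exp 1 / 4) ^ m n := div_pow_div_factorial_le (by norm_num) _
end
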